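/- arXiv:math/0210024 — 9 statements merged into one kernel-verified Lean document; each statement's English description precedes it below -/
import Mathlib

section
/- Let α be a partial action of a monoid M on a set X, and let Y = (M × X)/≃ be the quotient by the equivalence relation ≃ generated by (uv, x) ∼ (u, v·x) whenever v·x is defined. Then the map i: X → Y, i(x) = [e, x], is injective. -/
/-- The generating relation `(u*v, x) ∼ (u, v·x)` (whenever `v·x` is defined)
on `M × X`, whose generated equivalence defines the globalization. -/
def Sim {M X : Type*} [Monoid M] (α : M → X → Option X) :
    M × X → M × X → Prop := fun p q =>
  ∃ u v : M, p.1 = u * v ∧ q.1 = u ∧ α v p.2 = some q.2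

/-! The partial action itself, `(u, x) ↦ u·x` as an `Option`-valued map on `M × X`, is
constant on `≃`-classes because the strong equality `(uv)·x = u·(v·x)` makes it constant along
each generating step; evaluating it at `(1, x)` recovers `some x`. -/

section PartialAction

variable {M X : Type*} [Monoid M] {α : M → X → Option X}

theorem Sim.apply_eq (hmul : ∀ (u v : M) (x y : X), α v x = some y → α (u * v) x = α u y)
    {p q : M × X} (h : Sim α p q) : α p.1 p.2 = α q.1 q.2 := by
  obtain ⟨u, v, hp, hq, hv⟩ := h
  rw [hp, hq, hmul u v p.2 q.2 hv]

theorem eqvGen_sim_apply_eq (hmul : ∀ (u v : M) (x y : X), α v x = some y → α (u * v) x = α u y)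
    {p q : M × X} (h : Relation.EqvGen (Sim α) p q) : α p.1 p.2 = α q.1 q.2 :=
  (Setoid.ker fun p : M × X => α p.1 p.2).iseqv.eqvGen_iff.mp
    (h.mono fun _ _ => Sim.apply_eq hmul)

end PartialAction

/-- The canonical map `i : X → Y = (M × X)/≃`, `i x = [1, x]`, into the
globalization of a partial monoid action is injective. -/
theorem stmt_3 {M X : Type*} [Monoid M] (α : M → X → Option X)
    (hunit : ∀ x, α 1 x = some x)
    (hmul : ∀ (u v : M) (x y : X), α v x = some y → α (u * v) x = α u y)
    (x y : X) (h : Relation.EqvGen (Sim α) (1, x) (1, y)) : x = y := by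
  simpa only [hunit, Option.some.injEq] using eqvGen_sim_apply_eq hmul h
end

section
/- Every partial action of a monoid M on a set X is the restriction of a total action of M on some superset Y ⊇ X, i.e., there is a set Y, an injection i: X → Y, and a total action of M on Y such that for all u ∈ M and x ∈ X, u·x is defined in X iff u·i(x) ∈ i(X), and in that case i(u·x) = u·i(x). -/
/-!
Take `Y = M × X` modulo the relation generated by `(u * v, x) ~ (u, v·x)` whenever `v·x` is
defined, with `M` acting by left multiplication on the first coordinate, and embed `x` as
`(1, x)`. The strong equality `(u * v)·x = u·(v·x)` says exactly that `(u, x) ↦ u·x` (a partial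
value) is constant on classes; evaluating it recovers `x` from its image, which gives
injectivity, and reads off from the class of `(u, x)` whether `u·x` is defined.
-/

namespace PartialAction

variable {M X : Type*} [Monoid M] (α : M → X → Option X)

inductive Rel : M × X → M × X → Prop
  | mk (u v : M) {x y : X} : α v x = some y → Rel (u * v, x) (u, y)

def Globalization : Type _ := Quot (Rel α)

def embed (x : X) : Globalization α := Quot.mk _ (1, x)

variable {α}

def act (w : M) : Globalization α → Globalization α :=
  Quot.map (fun p => (w * p.1, p.2)) fun _ _ ⟨u, v, h⟩ => by
    simpa only [mul_assoc] using Rel.mk (w * u) v h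

theorem act_one (y : Globalization α) : act 1 y = y := by
  obtain ⟨⟨w, x⟩, rfl⟩ := Quot.exists_rep y
  exact congrArg (Quot.mk _ ·) (Prod.ext (one_mul w) rfl)

theorem act_mul (u v : M) (y : Globalization α) : act (u * v) y = act u (act v y) := by
  obtain ⟨⟨w, x⟩, rfl⟩ := Quot.exists_rep y
  exact congrArg (Quot.mk _ ·) (Prod.ext (mul_assoc u v w) rfl)

theorem act_embed_of_eq_some {u : M} {x z : X} (h : α u x = some z) :
    act u (embed α x) = embed α z :=
  Quot.sound (by simpa only [one_mul, mul_one] using Rel.mk 1 u h)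

variable (hmul : ∀ (u v : M) (x y : X), α v x = some y → α (u * v) x = α u y)
include hmul

def eval : Globalization α → Option X :=
  Quot.lift (fun p => α p.1 p.2) fun _ _ ⟨u, v, h⟩ => hmul u v _ _ h

theorem eval_act_embed (u : M) (x : X) : eval hmul (act u (embed α x)) = α u x := by
  simp only [eval, act, embed, Quot.map, mul_one]

variable (hunit : ∀ x, α 1 x = some x)
include hunit

theorem eval_embed (x : X) : eval hmul (embed α x) = some x := by
  rw [← act_one (embed α x), eval_act_embed, hunit]

theorem embed_injective : Function.Injective (embed α) := fun x x' h =>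
  Option.some.inj <| by rw [← eval_embed hmul hunit x, h, eval_embed hmul hunit]

theorem act_embed_mem_range_iff (u : M) (x : X) :
    act u (embed α x) ∈ Set.range (embed α) ↔ ∃ z, α u x = some z := by
  constructor
  · rintro ⟨z, hz⟩
    exact ⟨z, by rw [← eval_act_embed hmul, ← hz, eval_embed hmul hunit]⟩
  · rintro ⟨z, hz⟩
    exact ⟨z, (act_embed_of_eq_some hz).symm⟩

end PartialAction

open PartialAction in
/-- Every partial action of a monoid `M` on a set `X` is the restriction of a
total action of `M` on a superset `Y ⊇ X`: there are `Y`, an injection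
`i : X → Y` and a total `M`-action on `Y` such that `u·x` is defined in `X`
iff `u · i x ∈ i(X)`, and in that case `i (u·x) = u · i x`. -/
theorem stmt_5 {M X : Type u} [Monoid M] (α : M → X → Option X)
    (hunit : ∀ x, α 1 x = some x)
    (hmul : ∀ (u v : M) (x y : X), α v x = some y → α (u * v) x = α u y) :
    ∃ (Y : Type u) (i : X → Y) (act : M → Y → Y),
      Function.Injective i ∧
      (∀ y, act 1 y = y) ∧
      (∀ (u v : M) (y : Y), act (u * v) y = act u (act v y)) ∧
      (∀ (u : M) (x : X), (∃ z, α u x = some z) ↔ act u (i x) ∈ Set.range i) ∧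
      (∀ (u : M) (x z : X), α u x = some z → act u (i x) = i z) :=
  ⟨Globalization α, embed α, act, embed_injective hmul hunit, act_one, act_mul,
    fun u x => (act_embed_mem_range_iff hmul hunit u x).symm, fun _ _ _ => act_embed_of_eq_some⟩
end

section
/- Let α be a confluent partial action of a monoid M on a set X with globalization Y. Then for every triple (u1, u2, u3) ∈ M³ (indices mod 3) there exists w ∈ M such that for i = 1, 2, 3, (ui·X) ∩ (u_{i+1}·X) ⊆ w·X in Y. -/
/-!
Choose normal forms `nᵢ` of the words `uᵢ`. Since `n` is a normal word, reducing `(n, x)` can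
only let the last letter act, so it strips letters off `n` and passes through every prefix of
`n` down to the normal form `(v, z)` of `(n, x)`. If `(u, x) ↔* (u', y)`, confluence gives both
the same normal form, so `v` is a common prefix of `n` and `n'`, and `(u, x)` meets `w·X` for
every `w` between the longest common prefix of `n, n'` and `n` or `n'`. The longest common
prefixes of the three pairs among `n₁, n₂, n₃` are pairwise comparable (any two are prefixes of
the same `nᵢ`), and the longest of them lies in that range for all three pairs.
-/

/-- One-step reduction on words over `G` induced by the rules `R` of a monoid
presentation `⟨G|R⟩`. -/
def MStep {G : Type*} (R : List G → List G → Prop) : List G → List G → Prop :=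
  fun w₁ w₂ => ∃ a l r b : List G, R l r ∧ w₁ = a ++ l ++ b ∧ w₂ = a ++ r ++ b

/-- One-step reduction on `G* × X` for a confluent partial action: either
rewrite the word via `R`, or let the last (rightmost, acting first) generator
act on the point. -/
def PStep {G X : Type*} (R : List G → List G → Prop) (act : G → X → Option X) :
    List G × X → List G × X → Prop := fun p q =>
  (MStep R p.1 q.1 ∧ p.2 = q.2) ∨
  (∃ (w : List G) (g : G) (y : X),
    p.1 = w ++ [g] ∧ act g p.2 = some y ∧ q.1 = w ∧ q.2 = y)

open Relation

section Rewriting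

variable {α : Type*} {r : α → α → Prop} {a b : α}

def IsNormalForm (r : α → α → Prop) (a : α) : Prop := ∀ b, ¬ r a b

lemma IsNormalForm.eq_of_reflTransGen (ha : IsNormalForm r a) (h : ReflTransGen r a b) :
    b = a := by
  rcases h.cases_head with h | ⟨c, hc, -⟩
  · exact h.symm
  · exact absurd hc (ha c)

lemma IsNormalForm.eq_of_join (ha : IsNormalForm r a) (hb : IsNormalForm r b)
    (h : Join (ReflTransGen r) a b) : a = b := by
  obtain ⟨c, hac, hbc⟩ := h
  exact (ha.eq_of_reflTransGen hac).symm.trans (hb.eq_of_reflTransGen hbc)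

lemma exists_reflTransGen_isNormalForm (hwf : WellFounded (flip r)) (a : α) :
    ∃ b, ReflTransGen r a b ∧ IsNormalForm r b := by
  obtain ⟨b, hab, hmin⟩ := hwf.has_min {b | ReflTransGen r a b} ⟨a, .refl⟩
  exact ⟨b, hab, fun c hbc => hmin c (hab.tail hbc) hbc⟩

lemma join_of_eqvGen
    (hconf : ∀ a b c, ReflTransGen r a b → ReflTransGen r a c → Join (ReflTransGen r) b c)
    (h : EqvGen r a b) : Join (ReflTransGen r) a b :=
  (equivalence_join hconf).eqvGen_iff.mp <|
    EqvGen.mono (fun _ b hab => ⟨b, .single hab, .refl⟩) _ _ h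

end Rewriting

section Prefix

variable {α : Type*} {a b c w c₁ c₂ c₃ : List α}

def IsLongestCommonPrefix (a b c : List α) : Prop :=
  c <+: a ∧ c <+: b ∧ ∀ v, v <+: a → v <+: b → v <+: c

lemma exists_isLongestCommonPrefix : ∀ a b : List α, ∃ c, IsLongestCommonPrefix a b c
  | x :: a, y :: b => by
    by_cases hxy : x = y
    · obtain ⟨c, hca, hcb, hc⟩ := exists_isLongestCommonPrefix a b
      refine ⟨x :: c, by simpa using hca, by simpa [hxy] using hcb, ?_⟩
      rintro (_ | ⟨z, v⟩) hva hvb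
      · exact List.nil_prefix
      · rw [List.cons_prefix_cons] at hva hvb ⊢
        exact ⟨hva.1, hc v hva.2 hvb.2⟩
    · refine ⟨[], List.nil_prefix, List.nil_prefix, ?_⟩
      rintro (_ | ⟨z, v⟩) hva hvb
      · exact List.nil_prefix
      · rw [List.cons_prefix_cons] at hva hvb
        exact absurd (hva.1.symm.trans hvb.1) hxy
  | [], _ => ⟨[], List.nil_prefix, List.nil_prefix, fun _ hva _ => hva⟩
  | _ :: _, [] => ⟨[], List.nil_prefix, List.nil_prefix, fun _ _ hvb => hvb⟩

def IsPrefixBetween (a b w : List α) : Prop :=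
  (w <+: a ∨ w <+: b) ∧ ∀ v, v <+: a → v <+: b → v <+: w

lemma IsLongestCommonPrefix.isPrefixBetween (h : IsLongestCommonPrefix a b c) (hcw : c <+: w)
    (hw : w <+: a ∨ w <+: b) : IsPrefixBetween a b w :=
  ⟨hw, fun v hva hvb => (h.2.2 v hva hvb).trans hcw⟩

lemma isPrefixBetween_of_longest (h₁ : IsLongestCommonPrefix a b c₁)
    (h₂ : IsLongestCommonPrefix b c c₂) (h₃ : IsLongestCommonPrefix c a c₃)
    (h₂₁ : c₂ <+: c₁) (h₃₁ : c₃ <+: c₁) :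
    IsPrefixBetween a b c₁ ∧ IsPrefixBetween b c c₁ ∧ IsPrefixBetween c a c₁ :=
  ⟨h₁.isPrefixBetween (List.prefix_refl _) (.inl h₁.1), h₂.isPrefixBetween h₂₁ (.inl h₁.2.1),
    h₃.isPrefixBetween h₃₁ (.inr h₁.1)⟩

lemma exists_isPrefixBetween_cyclic (a b c : List α) :
    ∃ w, IsPrefixBetween a b w ∧ IsPrefixBetween b c w ∧ IsPrefixBetween c a w := by
  obtain ⟨c₁, h₁⟩ := exists_isLongestCommonPrefix a b
  obtain ⟨c₂, h₂⟩ := exists_isLongestCommonPrefix b c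
  obtain ⟨c₃, h₃⟩ := exists_isLongestCommonPrefix c a
  rcases List.prefix_or_prefix_of_prefix h₁.2.1 h₂.1 with h₁₂ | h₂₁
  · rcases List.prefix_or_prefix_of_prefix h₂.2.1 h₃.1 with h₂₃ | h₃₂
    · obtain ⟨hca, hab, hbc⟩ := isPrefixBetween_of_longest h₃ h₁ h₂ (h₁₂.trans h₂₃) h₂₃
      exact ⟨c₃, hab, hbc, hca⟩
    · obtain ⟨hbc, hca, hab⟩ := isPrefixBetween_of_longest h₂ h₃ h₁ h₃₂ h₁₂
      exact ⟨c₂, hab, hbc, hca⟩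
  · rcases List.prefix_or_prefix_of_prefix h₃.2.1 h₁.1 with h₃₁ | h₁₃
    · exact ⟨c₁, isPrefixBetween_of_longest h₁ h₂ h₃ h₂₁ h₃₁⟩
    · obtain ⟨hca, hab, hbc⟩ := isPrefixBetween_of_longest h₃ h₁ h₂ h₁₃ (h₂₁.trans h₁₃)
      exact ⟨c₃, hab, hbc, hca⟩

end Prefix

section PartialAction

variable {G X : Type*} {R : List G → List G → Prop} {act : G → X → Option X}

lemma IsNormalForm.of_isPrefix {n v : List G} (hn : IsNormalForm (MStep R) n) (hv : v <+: n) :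
    IsNormalForm (MStep R) v := by
  rintro m ⟨a, l, r, b, hR, rfl, -⟩
  obtain ⟨rest, rfl⟩ := hv
  exact hn (a ++ r ++ (b ++ rest)) ⟨a, l, r, b ++ rest, hR, by simp, rfl⟩

lemma isNormalForm_pStep {v : List G} {z : X} (hv : IsNormalForm (MStep R) v)
    (hz : ∀ w g, v = w ++ [g] → act g z = none) : IsNormalForm (PStep R act) (v, z) := by
  rintro q (⟨hm, -⟩ | ⟨w, g, y, hvw, hy, -⟩)
  · exact hv _ hm
  · simp [hz w g hvw] at hy

lemma exists_pStep_normalForm_of_isNormalForm (n : List G) (hn : IsNormalForm (MStep R) n)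
    (x : X) : ∃ v z, v <+: n ∧ ReflTransGen (PStep R act) (n, x) (v, z) ∧
      IsNormalForm (PStep R act) (v, z) ∧
      ∀ m, v <+: m → m <+: n → ∃ z', ReflTransGen (PStep R act) (n, x) (m, z') := by
  induction n using List.reverseRecOn generalizing x with
  | nil =>
    refine ⟨[], x, List.prefix_refl _, .refl, isNormalForm_pStep hn (by simp), ?_⟩
    intro m _ hm
    exact ⟨x, by rw [List.prefix_nil.mp hm]⟩
  | append_singleton w g ih =>
    cases hgx : act g x with
    | none =>
      refine ⟨w ++ [g], x, List.prefix_refl _, .refl, isNormalForm_pStep hn ?_, ?_⟩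
      · intro w' g' h
        obtain ⟨-, rfl⟩ : w = w' ∧ g = g' := by simpa using h
        exact hgx
      · intro m h₁ h₂
        exact ⟨x, by rw [h₁.eq_of_length (le_antisymm h₁.length_le h₂.length_le)]⟩
    | some y =>
      have step : PStep R act (w ++ [g], x) (w, y) := Or.inr ⟨w, g, y, rfl, hgx, rfl, rfl⟩
      obtain ⟨v, z, hvw, hred, hnf, hbetween⟩ := ih (hn.of_isPrefix (List.prefix_append w [g])) y
      refine ⟨v, z, hvw.trans (List.prefix_append _ _), .head step hred, hnf, ?_⟩
      intro m hvm hm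
      rcases List.prefix_concat_iff.mp hm with rfl | hmw
      · exact ⟨x, .refl⟩
      · obtain ⟨z', hz'⟩ := hbetween m hvm hmw
        exact ⟨z', .head step hz'⟩

lemma eqvGen_pStep_of_reflTransGen {u n : List G} {x : X} {q : List G × X}
    (hu : ReflTransGen (MStep R) u n) (h : ReflTransGen (PStep R act) (n, x) q) :
    EqvGen (PStep R act) (u, x) q :=
  EqvGen.reflTransGen_le_eqvGen _ _ _ <|
    (hu.lift (fun w => (w, x)) fun _ _ hs => Or.inl ⟨hs, rfl⟩).trans h

lemma exists_eqvGen_of_isPrefixBetween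
    (hconf : ∀ p q₁ q₂ : List G × X, ReflTransGen (PStep R act) p q₁ →
      ReflTransGen (PStep R act) p q₂ →
      ∃ t, ReflTransGen (PStep R act) q₁ t ∧ ReflTransGen (PStep R act) q₂ t)
    {u u' n n' w : List G} (hn : ReflTransGen (MStep R) u n) (hnf : IsNormalForm (MStep R) n)
    (hn' : ReflTransGen (MStep R) u' n') (hnf' : IsNormalForm (MStep R) n')
    (hw : IsPrefixBetween n n' w) {x y : X} (hxy : EqvGen (PStep R act) (u, x) (u', y)) :
    ∃ z, EqvGen (PStep R act) (u, x) (w, z) := by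
  obtain ⟨v, z, hvn, hred, hnfv, hthrough⟩ := exists_pStep_normalForm_of_isNormalForm n hnf x
  obtain ⟨v', z', hvn', hred', hnfv', hthrough'⟩ :=
    exists_pStep_normalForm_of_isNormalForm n' hnf' y
  have heqv := EqvGen.is_equivalence (PStep R act)
  have hvz : EqvGen (PStep R act) (v, z) (v', z') :=
    heqv.trans (heqv.symm (eqvGen_pStep_of_reflTransGen hn hred))
      (heqv.trans hxy (eqvGen_pStep_of_reflTransGen hn' hred'))
  obtain ⟨rfl, -⟩ : v = v' ∧ z = z' :=
    Prod.ext_iff.mp <| hnfv.eq_of_join hnfv' <| join_of_eqvGen hconf hvz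
  have hvw : v <+: w := hw.2 v hvn hvn'
  rcases hw.1 with hwn | hwn'
  · obtain ⟨z'', hz''⟩ := hthrough w hvw hwn
    exact ⟨z'', eqvGen_pStep_of_reflTransGen hn hz''⟩
  · obtain ⟨z'', hz''⟩ := hthrough' w hvw hwn'
    exact ⟨z'', heqv.trans hxy (eqvGen_pStep_of_reflTransGen hn' hz'')⟩

end PartialAction

theorem stmt_6_general {G X : Type*} (R : List G → List G → Prop) (act : G → X → Option X)
    (hnoeth : WellFounded (fun w₁ w₂ : List G => MStep R w₂ w₁))
    (hconfP : ∀ p q₁ q₂ : List G × X, Relation.ReflTransGen (PStep R act) p q₁ →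
      Relation.ReflTransGen (PStep R act) p q₂ →
      ∃ t, Relation.ReflTransGen (PStep R act) q₁ t ∧
        Relation.ReflTransGen (PStep R act) q₂ t)
    (u₁ u₂ u₃ : List G) :
    ∃ w : List G,
      (∀ x y : X, Relation.EqvGen (PStep R act) (u₁, x) (u₂, y) →
        ∃ z, Relation.EqvGen (PStep R act) (u₁, x) (w, z)) ∧
      (∀ x y : X, Relation.EqvGen (PStep R act) (u₂, x) (u₃, y) →
        ∃ z, Relation.EqvGen (PStep R act) (u₂, x) (w, z)) ∧
      (∀ x y : X, Relation.EqvGen (PStep R act) (u₃, x) (u₁, y) →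
        ∃ z, Relation.EqvGen (PStep R act) (u₃, x) (w, z)) := by
  obtain ⟨n₁, hn₁, hnf₁⟩ := exists_reflTransGen_isNormalForm hnoeth u₁
  obtain ⟨n₂, hn₂, hnf₂⟩ := exists_reflTransGen_isNormalForm hnoeth u₂
  obtain ⟨n₃, hn₃, hnf₃⟩ := exists_reflTransGen_isNormalForm hnoeth u₃
  obtain ⟨w, h₁₂, h₂₃, h₃₁⟩ := exists_isPrefixBetween_cyclic n₁ n₂ n₃
  exact ⟨w, fun _ _ => exists_eqvGen_of_isPrefixBetween hconfP hn₁ hnf₁ hn₂ hnf₂ h₁₂,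
    fun _ _ => exists_eqvGen_of_isPrefixBetween hconfP hn₂ hnf₂ hn₃ hnf₃ h₂₃,
    fun _ _ => exists_eqvGen_of_isPrefixBetween hconfP hn₃ hnf₃ hn₁ hnf₁ h₃₁⟩

/-- For a confluent partial action (encoded by a confluent presentation `⟨G|R⟩`
and the induced rewriting on `G* × X`), for every triple of monoid elements
(represented by words `u₁ u₂ u₃`) there is `w` such that each pairwise
intersection `uᵢ·X ∩ u_{i+1}·X` (indices mod 3) in the globalization
`Y = (G* × X)/↔*` is contained in `w·X`. Membership of the class of `(uᵢ,x)`
in `w·X` is expressed as `∃ z, (uᵢ,x) ↔* (w,z)`. -/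
theorem stmt_6 {G X : Type*} (R : List G → List G → Prop) (act : G → X → Option X)
    (hnoeth : WellFounded (fun w₁ w₂ : List G => MStep R w₂ w₁))
    (hconfM : ∀ w s₁ s₂ : List G, Relation.ReflTransGen (MStep R) w s₁ →
      Relation.ReflTransGen (MStep R) w s₂ →
      ∃ t, Relation.ReflTransGen (MStep R) s₁ t ∧ Relation.ReflTransGen (MStep R) s₂ t)
    (hnosingle : ∀ (g : G) (r : List G), ¬ R [g] r)
    (hconfP : ∀ p q₁ q₂ : List G × X, Relation.ReflTransGen (PStep R act) p q₁ →
      Relation.ReflTransGen (PStep R act) p q₂ →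
      ∃ t, Relation.ReflTransGen (PStep R act) q₁ t ∧
        Relation.ReflTransGen (PStep R act) q₂ t)
    (u₁ u₂ u₃ : List G) :
    ∃ w : List G,
      (∀ x y : X, Relation.EqvGen (PStep R act) (u₁, x) (u₂, y) →
        ∃ z, Relation.EqvGen (PStep R act) (u₁, x) (w, z)) ∧
      (∀ x y : X, Relation.EqvGen (PStep R act) (u₂, x) (u₃, y) →
        ∃ z, Relation.EqvGen (PStep R act) (u₂, x) (w, z)) ∧
      (∀ x y : X, Relation.EqvGen (PStep R act) (u₃, x) (u₁, y) →
        ∃ z, Relation.EqvGen (PStep R act) (u₃, x) (w, z)) :=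
  stmt_6_general R act hnoeth hconfP u₁ u₂ u₃
end

section
/- Let α be a confluent partial action of a monoid M on a set X with globalization Y. If a = u·x ∈ Y has normal form v·y, then a ∈ w·X for every w ∈ M with v ⪯ w ⪯ u in the prefix order. -/
namespace Relation

variable {α : Type*} {r : α → α → Prop}

theorem EqvGen.lift {β : Type*} {p : β → β → Prop} (f : α → β) (h : ∀ a b, r a b → p (f a) (f b)) {a b : α}
    (hab : EqvGen r a b) : EqvGen p (f a) (f b) := by
  induction hab with
  | rel a b hab => exact .rel _ _ (h a b hab)
  | refl a => exact .refl _
  | symm a b _ ih => exact ih.symm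
  | trans a b c _ _ ih₁ ih₂ => exact ih₁.trans _ _ _ ih₂

theorem EqvGen.join_reflTransGen
    (hconf : ∀ a b c, ReflTransGen r a b → ReflTransGen r a c → Join (ReflTransGen r) b c)
    {a b : α} (hab : EqvGen r a b) : Join (ReflTransGen r) a b :=
  (equivalence_join hconf).eqvGen_iff.mp (hab.mono fun _ _ h ↦ ⟨_, .single h, .refl⟩)

theorem ReflTransGen.eq_of_normal {b c : α} (hb : ∀ d, ¬ r b d) (hbc : ReflTransGen r b c) :
    c = b := by
  rcases hbc.cases_head with h | ⟨d, hbd, _⟩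
  · exact h.symm
  · exact absurd hbd (hb d)

theorem EqvGen.reflTransGen_of_normal
    (hconf : ∀ a b c, ReflTransGen r a b → ReflTransGen r a c → Join (ReflTransGen r) b c)
    {a b : α} (hb : ∀ d, ¬ r b d) (hab : EqvGen r a b) : ReflTransGen r a b := by
  obtain ⟨c, hac, hbc⟩ := hab.join_reflTransGen hconf
  rwa [hbc.eq_of_normal hb] at hac

end Relation

open Relation

section

variable {G X : Type*} {R : List G → List G → Prop} {act : G → X → Option X}

theorem MStep.append_right {w w' : List G} (h : MStep R w w') (s : List G) :
    MStep R (w ++ s) (w' ++ s) := by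
  obtain ⟨a, l, r, b, hlr, rfl, rfl⟩ := h
  exact ⟨a, l, r, b ++ s, hlr, by simp, by simp⟩

theorem MStep.normal_of_prefix {p w : List G} (hw : ∀ w', ¬ MStep R w w') (hp : p <+: w) :
    ∀ p', ¬ MStep R p p' := by
  obtain ⟨s, rfl⟩ := hp
  exact fun p' h ↦ hw _ (h.append_right s)

theorem PStep.eqvGen_of_mstep {w w' : List G} (x : X) (h : EqvGen (MStep R) w w') :
    EqvGen (PStep R act) (w, x) (w', x) :=
  h.lift (fun w ↦ (w, x)) fun _ _ hstep ↦ .inl ⟨hstep, rfl⟩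

theorem PStep.exists_reflTransGen_of_prefix {v : List G} {y : X} {p : List G × X}
    (hpv : ReflTransGen (PStep R act) p (v, y)) (hp : ∀ p', ¬ MStep R p.1 p')
    {q : List G} (hvq : v <+: q) (hqp : q <+: p.1) :
    ∃ z, ReflTransGen (PStep R act) p (q, z) := by
  induction hpv using ReflTransGen.head_induction_on generalizing q with
  | refl => exact ⟨y, by rw [hqp.eq_of_length (le_antisymm hqp.length_le hvq.length_le)]⟩
  | @head p c hpc _ ih =>
    rcases hpc with ⟨hword, _⟩ | ⟨w, g, z, hp_eq, hact, hc₁, hc₂⟩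
    · exact absurd hword (hp _)
    · rw [hp_eq] at hqp hp
      rcases List.prefix_concat_iff.mp hqp with rfl | hqw
      · exact ⟨p.2, by rw [← hp_eq]⟩
      · have hc : ∀ c', ¬ MStep R c.1 c' :=
          hc₁ ▸ MStep.normal_of_prefix hp (List.prefix_append w [g])
        obtain ⟨z', hz'⟩ := ih hc hvq (hc₁ ▸ hqw)
        exact ⟨z', hz'.head (.inr ⟨w, g, z, hp_eq, hact, hc₁, hc₂⟩)⟩

end

theorem stmt_7_general {G X : Type*} (R : List G → List G → Prop) (act : G → X → Option X)
    (hconfP : ∀ p q₁ q₂ : List G × X, Relation.ReflTransGen (PStep R act) p q₁ →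
      Relation.ReflTransGen (PStep R act) p q₂ →
      ∃ t, Relation.ReflTransGen (PStep R act) q₁ t ∧
        Relation.ReflTransGen (PStep R act) q₂ t)
    (u v w un wn : List G) (x : X) (y : X)
    (hvy_normal : ∀ q, ¬ PStep R act (v, y) q)
    (hnf : Relation.EqvGen (PStep R act) (u, x) (v, y))
    (hun_normal : ∀ w', ¬ MStep R un w')
    (hun : Relation.EqvGen (MStep R) u un)
    (hwn : Relation.EqvGen (MStep R) w wn)
    (hvw : v <+: wn) (hwu : wn <+: un) :
    ∃ z : X, Relation.EqvGen (PStep R act) (u, x) (w, z) := by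
  have hux : EqvGen (PStep R act) (u, x) (un, x) := PStep.eqvGen_of_mstep x hun
  have hunx : ReflTransGen (PStep R act) (un, x) (v, y) :=
    (hux.symm.trans _ _ _ hnf).reflTransGen_of_normal hconfP hvy_normal
  obtain ⟨z, hz⟩ := PStep.exists_reflTransGen_of_prefix hunx hun_normal hvw hwu
  exact ⟨z, hux.trans _ _ _ <| (EqvGen.reflTransGen_le_eqvGen _ _ _ hz).trans _ _ _
    (PStep.eqvGen_of_mstep z hwn).symm⟩

/-- Lemma 12 of the paper: if `a = u·x` has normal form `v·y` in the
globalization of a confluent partial action, then `a ∈ w·X` for every `w` with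
`v ⪯ w ⪯ u` in the prefix order (`u ⪯ p` iff the normal form of `u` is a
prefix of the normal form of `p`). Here `un`, `wn` are the normal forms of the
words `u`, `w`, and `(v, y)` is the (pair-)normal form of `(u, x)`. -/
theorem stmt_7 {G X : Type*} (R : List G → List G → Prop) (act : G → X → Option X)
    (hnoeth : WellFounded (fun w₁ w₂ : List G => MStep R w₂ w₁))
    (hconfM : ∀ w s₁ s₂ : List G, Relation.ReflTransGen (MStep R) w s₁ →
      Relation.ReflTransGen (MStep R) w s₂ →
      ∃ t, Relation.ReflTransGen (MStep R) s₁ t ∧ Relation.ReflTransGen (MStep R) s₂ t)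
    (hnosingle : ∀ (g : G) (r : List G), ¬ R [g] r)
    (hconfP : ∀ p q₁ q₂ : List G × X, Relation.ReflTransGen (PStep R act) p q₁ →
      Relation.ReflTransGen (PStep R act) p q₂ →
      ∃ t, Relation.ReflTransGen (PStep R act) q₁ t ∧
        Relation.ReflTransGen (PStep R act) q₂ t)
    (u v w un wn : List G) (x : X) (y : X)
    (hvy_normal : ∀ q, ¬ PStep R act (v, y) q)
    (hnf : Relation.EqvGen (PStep R act) (u, x) (v, y))
    (hun_normal : ∀ w', ¬ MStep R un w')
    (hun : Relation.EqvGen (MStep R) u un)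
    (hwn_normal : ∀ w', ¬ MStep R wn w')
    (hwn : Relation.EqvGen (MStep R) w wn)
    (hvw : v <+: wn) (hwu : wn <+: un) :
    ∃ z : X, Relation.EqvGen (PStep R act) (u, x) (w, z) :=
  stmt_7_general R act hconfP u v w un wn x y hvy_normal hnf hun_normal hun hwn hvw hwu
end

section
/- Let α be a continuous partial action of a monoid M on a topological space X such that dom(u) is closed (respectively open) in X for every u ∈ M. Then the canonical map X → Y into the topological globalization is a closed (respectively open) embedding. -/
open Topology

/-- The (set-theoretic) globalization `Y = (M × X)/≃`. -/
def Glob {M X : Type*} [Monoid M] (α : M → X → Option X) : Type _ :=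
  Quot (Relation.EqvGen (Sim α))

/-- The class of `(u, x)` in the globalization. -/
def Glob.mk {M X : Type*} [Monoid M] (α : M → X → Option X) (p : M × X) : Glob α :=
  Quot.mk _ p

/-- The topological globalization: the final topology on `Y` with respect to
all the maps `x ↦ [u, x]`, `u ∈ M`. -/
instance {M X : Type*} [Monoid M] (α : M → X → Option X) [t : TopologicalSpace X] :
    TopologicalSpace (Glob α) :=
  ⨆ u : M, TopologicalSpace.coinduced (fun x : X => Glob.mk α (u, x)) t

/-!
The value `α u x` is constant on equivalence classes (this is what `hmul` says), so
`[u, x] = [1, c]` exactly when `u · x = c`. Hence the preimage of `[1, C]` under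
`x ↦ [u, x]` is `{x ∈ dom u | u · x ∈ C}`, which is closed (open) when `C` and `dom u`
are, by continuity of `u` on `dom u`. The final topology thus makes `x ↦ [1, x]` a
closed (open) map, and it is continuous and injective.
-/

namespace Glob

variable {M X : Type*} [Monoid M] {α : M → X → Option X}

theorem eval_eq_of_eqvGen
    (hmul : ∀ (u v : M) (x y : X), α v x = some y → α (u * v) x = α u y)
    {p q : M × X} (h : Relation.EqvGen (Sim α) p q) : α p.1 p.2 = α q.1 q.2 := by
  induction h with
  | rel p q h =>
    obtain ⟨u, v, hp, hq, hv⟩ := h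
    rw [hp, hq]
    exact hmul u v _ _ hv
  | refl => rfl
  | symm _ _ _ ih => exact ih.symm
  | trans _ _ _ _ _ ih₁ ih₂ => exact ih₁.trans ih₂

theorem mk_eq_mk_one_iff (hunit : ∀ x, α 1 x = some x)
    (hmul : ∀ (u v : M) (x y : X), α v x = some y → α (u * v) x = α u y)
    (u : M) (x c : X) :
    Glob.mk α (u, x) = Glob.mk α (1, c) ↔ α u x = some c := by
  constructor
  · intro h
    have := congrArg (Quot.lift (fun p : M × X => α p.1 p.2)
      fun _ _ => eval_eq_of_eqvGen hmul) h
    simpa [Glob.mk, hunit] using this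
  · intro h
    exact Quot.sound (.rel _ _ ⟨1, u, (one_mul u).symm, rfl, h⟩)

theorem mk_one_injective (hunit : ∀ x, α 1 x = some x)
    (hmul : ∀ (u v : M) (x y : X), α v x = some y → α (u * v) x = α u y) :
    Function.Injective fun x : X => Glob.mk α (1, x) := by
  intro x y h
  simpa [hunit] using (mk_eq_mk_one_iff hunit hmul 1 x y).1 h

theorem preimage_mk_image_mk_one (hunit : ∀ x, α 1 x = some x)
    (hmul : ∀ (u v : M) (x y : X), α v x = some y → α (u * v) x = α u y)
    (u : M) (C : Set X) :
    (fun x : X => Glob.mk α (u, x)) ⁻¹' ((fun x : X => Glob.mk α (1, x)) '' C)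
      = {x | (α u x).isSome} ∩ (fun x => (α u x).getD x) ⁻¹' C := by
  ext x
  simp only [Set.mem_preimage, Set.mem_image, Set.mem_inter_iff, Set.mem_ofPred_eq,
    eq_comm (b := Glob.mk α (u, x)), mk_eq_mk_one_iff hunit hmul]
  constructor
  · rintro ⟨c, hc, hux⟩
    simpa [hux] using hc
  · rintro ⟨hdom, hC⟩
    obtain ⟨c, hux⟩ := Option.isSome_iff_exists.1 hdom
    exact ⟨c, by simpa [hux] using hC, hux⟩

variable [TopologicalSpace X]

theorem isOpen_iff (V : Set (Glob α)) :
    IsOpen V ↔ ∀ u : M, IsOpen ((fun x : X => Glob.mk α (u, x)) ⁻¹' V) :=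
  isOpen_iSup_iff

theorem isClosed_iff (V : Set (Glob α)) :
    IsClosed V ↔ ∀ u : M, IsClosed ((fun x : X => Glob.mk α (u, x)) ⁻¹' V) := by
  simp only [← isOpen_compl_iff, isOpen_iff, Set.preimage_compl]

theorem continuous_mk (u : M) : Continuous fun x : X => Glob.mk α (u, x) :=
  continuous_iff_coinduced_le.2 <|
    le_iSup (fun u : M => TopologicalSpace.coinduced (fun x : X => Glob.mk α (u, x)) ‹_›) u

theorem isClosedMap_mk_one (hunit : ∀ x, α 1 x = some x)
    (hmul : ∀ (u v : M) (x y : X), α v x = some y → α (u * v) x = α u y)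
    (hcont : ∀ u : M, ContinuousOn (fun x => (α u x).getD x) {x | (α u x).isSome})
    (hdom : ∀ u : M, IsClosed {x | (α u x).isSome}) :
    IsClosedMap fun x : X => Glob.mk α (1, x) := fun C hC =>
  (isClosed_iff _).2 fun u => by
    rw [preimage_mk_image_mk_one hunit hmul]
    exact (hcont u).preimage_isClosed_of_isClosed (hdom u) hC

theorem isOpenMap_mk_one (hunit : ∀ x, α 1 x = some x)
    (hmul : ∀ (u v : M) (x y : X), α v x = some y → α (u * v) x = α u y)
    (hcont : ∀ u : M, ContinuousOn (fun x => (α u x).getD x) {x | (α u x).isSome})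
    (hdom : ∀ u : M, IsOpen {x | (α u x).isSome}) :
    IsOpenMap fun x : X => Glob.mk α (1, x) := fun C hC =>
  (isOpen_iff _).2 fun u => by
    rw [preimage_mk_image_mk_one hunit hmul]
    exact (hcont u).isOpen_inter_preimage (hdom u) hC

end Glob

/-- For a continuous partial action of a monoid `M` on a topological space `X`
with all domains `dom(u)` closed (resp. open), the canonical map `X → Y`,
`x ↦ [e, x]`, into the topological globalization is a closed (resp. open)
embedding. -/
theorem stmt_9 {M X : Type*} [Monoid M] [TopologicalSpace X]
    (α : M → X → Option X)
    (hunit : ∀ x, α 1 x = some x)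
    (hmul : ∀ (u v : M) (x y : X), α v x = some y → α (u * v) x = α u y)
    (hcont : ∀ u : M, ContinuousOn (fun x => (α u x).getD x) {x | (α u x).isSome}) :
    ((∀ u : M, IsClosed {x | (α u x).isSome}) →
      IsClosedEmbedding (fun x : X => Glob.mk α (1, x))) ∧
    ((∀ u : M, IsOpen {x | (α u x).isSome}) →
      IsOpenEmbedding (fun x : X => Glob.mk α (1, x))) :=
  ⟨fun hdom => .of_continuous_injective_isClosedMap (Glob.continuous_mk 1)
      (Glob.mk_one_injective hunit hmul) (Glob.isClosedMap_mk_one hunit hmul hcont hdom),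
    fun hdom => .of_continuous_injective_isOpenMap (Glob.continuous_mk 1)
      (Glob.mk_one_injective hunit hmul) (Glob.isOpenMap_mk_one hunit hmul hcont hdom)⟩
end

section
/- Let α be a confluent continuous partial action with dom(g) closed (open) in X for every generator g ∈ G. Then dom(u) is closed (open) in X for every u ∈ M. Moreover if additionally each g: dom(g) → X is a closed (open) map, then each u: dom(u) → X is closed (open). -/
/-- The globalization `Y` of a confluent partial action: the quotient of
`G* × X` by the equivalence generated by the one-step reduction `PStep`. -/
def PGlob {G X : Type*} (R : List G → List G → Prop) (act : G → X → Option X) : Type _ :=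
  Quot (Relation.EqvGen (PStep R act))

/-- The class of `(w, x)` in the globalization. -/
def PGlob.mk {G X : Type*} (R : List G → List G → Prop) (act : G → X → Option X)
    (p : List G × X) : PGlob R act :=
  Quot.mk _ p

/-- The topological globalization: the final topology with respect to all the
maps `x ↦ [w, x]`, `w` a word over `G`. -/
instance {G X : Type*} (R : List G → List G → Prop) (act : G → X → Option X)
    [t : TopologicalSpace X] : TopologicalSpace (PGlob R act) :=
  ⨆ w : List G, TopologicalSpace.coinduced (fun x : X => PGlob.mk R act (w, x)) t

/-
For a word `v` in normal form the only possible first step from `(v, x)` is to let the last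
letter act, so `dom(v ++ [g]) = dom(g) ∩ g⁻¹(dom v)` and `(v ++ [g])(C) = v(g(C))`. Confluence of
`PStep`, together with the fact that `([], y)` admits no step, makes `dom w` and `w(C)` invariant
under rewriting `w`, and termination provides a normal form for every word. Induction along the
normal form then reduces everything to the generators, where continuity of `g` on `dom(g)`
(resp. closedness or openness of `g`) gives the claim.
-/

open Relation

theorem Relation.reflTransGen_iff_of_confluent {α : Type*} {r : α → α → Prop} {a b t : α}
    (hconf : ∀ a b c, ReflTransGen r a b → ReflTransGen r a c → Join (ReflTransGen r) b c)
    (ht : ∀ c, ¬ r t c) (hab : ReflTransGen r a b) :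
    ReflTransGen r a t ↔ ReflTransGen r b t := by
  refine ⟨fun hat => ?_, hab.trans⟩
  obtain ⟨c, htc, hbc⟩ := hconf a t b hat hab
  rwa [(reflTransGen_iff_eq ht).1 htc] at hbc

namespace MStep

variable {G : Type*} {R : List G → List G → Prop}

def IsNormal (R : List G → List G → Prop) (v : List G) : Prop := ∀ u, ¬ MStep R v u

theorem IsNormal.of_append {v s : List G} (h : IsNormal R (v ++ s)) : IsNormal R v := by
  rintro _ ⟨a, l, r, b, hlr, rfl, rfl⟩
  exact h (a ++ r ++ (b ++ s)) ⟨a, l, r, b ++ s, hlr, by simp, by simp⟩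

theorem exists_isNormal (hnoeth : WellFounded (fun w₁ w₂ : List G => MStep R w₂ w₁))
    (w : List G) : ∃ v, ReflTransGen (MStep R) w v ∧ IsNormal R v := by
  obtain ⟨v, hwv, hmin⟩ := hnoeth.has_min {v | ReflTransGen (MStep R) w v} ⟨w, .refl⟩
  exact ⟨v, hwv, fun u hvu => hmin u (hwv.tail hvu) hvu⟩

-- a rule `[] → r` could be applied at the end of any word, so no word would be normal
theorem not_rule_nil (hnoeth : WellFounded (fun w₁ w₂ : List G => MStep R w₂ w₁))
    (r : List G) : ¬ R [] r := fun hr => by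
  obtain ⟨v, -, hv⟩ := exists_isNormal hnoeth []
  exact hv (v ++ r) ⟨v, [], r, [], hr, by simp, by simp⟩

end MStep

namespace PStep

variable {G X : Type*} {R : List G → List G → Prop} {act : G → X → Option X}

-- `ReflTransGen (PStep R act) (w, x) ([], y)` encodes `w·x = y`.
def dom (R : List G → List G → Prop) (act : G → X → Option X) (w : List G) : Set X :=
  {x | ∃ y, ReflTransGen (PStep R act) (w, x) ([], y)}

def image (R : List G → List G → Prop) (act : G → X → Option X) (w : List G) (C : Set X) :
    Set X :=
  {y | ∃ x ∈ C, ReflTransGen (PStep R act) (w, x) ([], y)}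

theorem not_nil (hR : ∀ r, ¬ R [] r) (y : X) : ∀ q, ¬ PStep R act ([], y) q := by
  rintro _ (⟨⟨a, l, r, b, hlr, hnil, -⟩, -⟩ | ⟨w, g, z, hnil, -⟩)
  · obtain ⟨-, rfl, -⟩ : a = [] ∧ l = [] ∧ b = [] := by simpa using hnil.symm
    exact hR r hlr
  · simpa using congrArg List.length hnil

theorem reflTransGen_nil_iff_of_mstep (hR : ∀ r, ¬ R [] r)
    (hconf : ∀ p q₁ q₂, ReflTransGen (PStep R act) p q₁ → ReflTransGen (PStep R act) p q₂ →
      Join (ReflTransGen (PStep R act)) q₁ q₂)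
    {w w' : List G} (h : ReflTransGen (MStep R) w w') (x y : X) :
    ReflTransGen (PStep R act) (w, x) ([], y) ↔ ReflTransGen (PStep R act) (w', x) ([], y) :=
  reflTransGen_iff_of_confluent hconf (not_nil hR y)
    (h.lift (·, x) fun _ _ hstep => Or.inl ⟨hstep, rfl⟩)

theorem reflTransGen_append_singleton_nil_iff {v : List G} {g : G}
    (hv : MStep.IsNormal R (v ++ [g])) (x y : X) :
    ReflTransGen (PStep R act) (v ++ [g], x) ([], y) ↔
      ∃ z, act g x = some z ∧ ReflTransGen (PStep R act) (v, z) ([], y) := by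
  refine ⟨fun h => ?_, fun ⟨z, hz, hzy⟩ => .head (Or.inr ⟨v, g, z, rfl, hz, rfl, rfl⟩) hzy⟩
  rcases h.cases_head with hnil | ⟨⟨w, z⟩, hstep, hzy⟩
  · simpa using congrArg (·.1.length) hnil
  rcases hstep with ⟨hm, -⟩ | ⟨w', g', z', hw, hz, rfl, rfl⟩
  · exact absurd hm (hv _)
  obtain ⟨rfl, hg⟩ := List.append_inj' hw rfl
  obtain rfl : g = g' := by simpa using hg
  exact ⟨_, hz, hzy⟩

theorem dom_nil : dom R act [] = Set.univ :=
  Set.eq_univ_of_forall fun x => ⟨x, .refl⟩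

theorem image_nil (hR : ∀ r, ¬ R [] r) (C : Set X) : image R act [] C = C := by
  ext y
  simp only [image, Set.mem_ofPred_eq, reflTransGen_iff_eq (not_nil hR _), Prod.mk.injEq,
    true_and]
  exact ⟨fun ⟨x, hx, hyx⟩ => hyx ▸ hx, fun hy => ⟨y, hy, rfl⟩⟩

theorem dom_append_singleton {v : List G} {g : G} (hv : MStep.IsNormal R (v ++ [g])) :
    dom R act (v ++ [g]) =
      {x | (act g x).isSome} ∩ (fun x => (act g x).getD x) ⁻¹' dom R act v := by
  ext x
  simp only [dom, Set.mem_ofPred_eq, Set.mem_inter_iff, Set.mem_preimage,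
    reflTransGen_append_singleton_nil_iff hv]
  cases act g x <;> simp

theorem image_append_singleton {v : List G} {g : G} (hv : MStep.IsNormal R (v ++ [g]))
    (C : Set X) :
    image R act (v ++ [g]) C = image R act v {z | ∃ x ∈ C, act g x = some z} := by
  ext y
  simp only [image, Set.mem_ofPred_eq, reflTransGen_append_singleton_nil_iff hv]
  exact ⟨fun ⟨x, hx, z, hz, hzy⟩ => ⟨z, ⟨x, hx, hz⟩, hzy⟩,
    fun ⟨z, ⟨x, hx, hz⟩, hzy⟩ => ⟨x, hx, z, hz, hzy⟩⟩

variable (hnoeth : WellFounded (fun w₁ w₂ : List G => MStep R w₂ w₁))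
  (hconf : ∀ p q₁ q₂, ReflTransGen (PStep R act) p q₁ → ReflTransGen (PStep R act) p q₂ →
    Join (ReflTransGen (PStep R act)) q₁ q₂)
include hnoeth hconf

theorem dom_mem {S : Set (Set X)} (huniv : Set.univ ∈ S)
    (hpre : ∀ g, ∀ t ∈ S, {x | (act g x).isSome} ∩ (fun x => (act g x).getD x) ⁻¹' t ∈ S)
    (w : List G) : dom R act w ∈ S := by
  obtain ⟨v, hwv, hv⟩ := MStep.exists_isNormal hnoeth w
  have hdom : dom R act w = dom R act v := Set.ext fun x =>
    exists_congr (reflTransGen_nil_iff_of_mstep (MStep.not_rule_nil hnoeth) hconf hwv x)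
  rw [hdom]
  clear hdom hwv
  induction v using List.reverseRecOn with
  | nil => rwa [dom_nil]
  | append_singleton v g ih => rw [dom_append_singleton hv]; exact hpre g _ (ih hv.of_append)

theorem image_mem {S : Set (Set X)} (himg : ∀ g, ∀ C ∈ S, {y | ∃ x ∈ C, act g x = some y} ∈ S)
    (w : List G) {C : Set X} (hC : C ∈ S) : image R act w C ∈ S := by
  have hR := MStep.not_rule_nil hnoeth
  obtain ⟨v, hwv, hv⟩ := MStep.exists_isNormal hnoeth w
  have himage : image R act w C = image R act v C := Set.ext fun y =>
    exists_congr fun x => and_congr_right fun _ => reflTransGen_nil_iff_of_mstep hR hconf hwv x y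
  rw [himage]
  clear himage hwv
  induction v using List.reverseRecOn generalizing C with
  | nil => rwa [image_nil hR]
  | append_singleton v g ih =>
    rw [image_append_singleton hv]; exact ih (himg g C hC) hv.of_append

end PStep

theorem stmt_14_general {G X : Type*} [TopologicalSpace X]
    (R : List G → List G → Prop) (act : G → X → Option X)
    (hnoeth : WellFounded (fun w₁ w₂ : List G => MStep R w₂ w₁))
    (hconfP : ∀ p q₁ q₂ : List G × X, Relation.ReflTransGen (PStep R act) p q₁ →
      Relation.ReflTransGen (PStep R act) p q₂ →
      ∃ t, Relation.ReflTransGen (PStep R act) q₁ t ∧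
        Relation.ReflTransGen (PStep R act) q₂ t)
    (hcont : ∀ g : G, ContinuousOn (fun x => (act g x).getD x) {x | (act g x).isSome}) :
    ((∀ g : G, IsClosed {x | (act g x).isSome}) →
      ∀ w : List G,
        IsClosed {x : X | ∃ y, Relation.ReflTransGen (PStep R act) (w, x) ([], y)}) ∧
    ((∀ g : G, IsOpen {x | (act g x).isSome}) →
      ∀ w : List G,
        IsOpen {x : X | ∃ y, Relation.ReflTransGen (PStep R act) (w, x) ([], y)}) ∧
    (((∀ g : G, IsClosed {x | (act g x).isSome}) ∧
      (∀ (g : G) (C : Set X), IsClosed C →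
        IsClosed {y : X | ∃ x ∈ C, act g x = some y})) →
      ∀ (w : List G) (C : Set X), IsClosed C →
        IsClosed {y : X | ∃ x ∈ C, Relation.ReflTransGen (PStep R act) (w, x) ([], y)}) ∧
    (((∀ g : G, IsOpen {x | (act g x).isSome}) ∧
      (∀ (g : G) (C : Set X), IsOpen C →
        IsOpen {y : X | ∃ x ∈ C, act g x = some y})) →
      ∀ (w : List G) (C : Set X), IsOpen C →
        IsOpen {y : X | ∃ x ∈ C, Relation.ReflTransGen (PStep R act) (w, x) ([], y)}) := by
  refine ⟨fun hcl w => ?_, fun hop w => ?_, fun ⟨_, himg⟩ w C hC => ?_,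
    fun ⟨_, himg⟩ w C hC => ?_⟩
  · exact PStep.dom_mem (S := {s | IsClosed s}) hnoeth hconfP isClosed_univ
      (fun g _ ht => (hcont g).preimage_isClosed_of_isClosed (hcl g) ht) w
  · exact PStep.dom_mem (S := {s | IsOpen s}) hnoeth hconfP isOpen_univ
      (fun g _ ht => (hcont g).isOpen_inter_preimage (hop g) ht) w
  · exact PStep.image_mem (S := {s | IsClosed s}) hnoeth hconfP himg w hC
  · exact PStep.image_mem (S := {s | IsOpen s}) hnoeth hconfP himg w hC

/-- For a confluent continuous partial action: if `dom(g)` is closed (resp.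
open) for every generator `g`, then `dom(u)` is closed (resp. open) for every
`u ∈ M` (represented by a word `w`; `dom(u) = {x | u·x is defined}`); if
moreover each `g` is a closed (resp. open) map on its domain, then so is each
`u` (images of traces of closed/open sets on the domain are closed/open). -/
theorem stmt_14 {G X : Type*} [TopologicalSpace X]
    (R : List G → List G → Prop) (act : G → X → Option X)
    (hnoeth : WellFounded (fun w₁ w₂ : List G => MStep R w₂ w₁))
    (hconfM : ∀ w s₁ s₂ : List G, Relation.ReflTransGen (MStep R) w s₁ →
      Relation.ReflTransGen (MStep R) w s₂ →
      ∃ t, Relation.ReflTransGen (MStep R) s₁ t ∧ Relation.ReflTransGen (MStep R) s₂ t)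
    (hnosingle : ∀ (g : G) (r : List G), ¬ R [g] r)
    (hconfP : ∀ p q₁ q₂ : List G × X, Relation.ReflTransGen (PStep R act) p q₁ →
      Relation.ReflTransGen (PStep R act) p q₂ →
      ∃ t, Relation.ReflTransGen (PStep R act) q₁ t ∧
        Relation.ReflTransGen (PStep R act) q₂ t)
    (hcont : ∀ g : G, ContinuousOn (fun x => (act g x).getD x) {x | (act g x).isSome}) :
    ((∀ g : G, IsClosed {x | (act g x).isSome}) →
      ∀ w : List G,
        IsClosed {x : X | ∃ y, Relation.ReflTransGen (PStep R act) (w, x) ([], y)}) ∧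
    ((∀ g : G, IsOpen {x | (act g x).isSome}) →
      ∀ w : List G,
        IsOpen {x : X | ∃ y, Relation.ReflTransGen (PStep R act) (w, x) ([], y)}) ∧
    (((∀ g : G, IsClosed {x | (act g x).isSome}) ∧
      (∀ (g : G) (C : Set X), IsClosed C →
        IsClosed {y : X | ∃ x ∈ C, act g x = some y})) →
      ∀ (w : List G) (C : Set X), IsClosed C →
        IsClosed {y : X | ∃ x ∈ C, Relation.ReflTransGen (PStep R act) (w, x) ([], y)}) ∧
    (((∀ g : G, IsOpen {x | (act g x).isSome}) ∧
      (∀ (g : G) (C : Set X), IsOpen C →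
        IsOpen {y : X | ∃ x ∈ C, act g x = some y})) →
      ∀ (w : List G) (C : Set X), IsOpen C →
        IsOpen {y : X | ∃ x ∈ C, Relation.ReflTransGen (PStep R act) (w, x) ([], y)}) :=
  stmt_14_general R act hnoeth hconfP hcont
end

section
/- Let α be a closed confluent continuous partial action of a monoid M on a topological space X, and let Z be a topological space such that X has dimensional type Z (every continuous map from a closed subset of X to Z extends continuously to X). Then the globalization Y also has dimensional type Z. -/
/-- `A` has dimensional type `Z` (Wallace: `A τ Z`): every continuous map from
a closed subspace of `A` to `Z` extends continuously to all of `A`. -/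
def DimType (A : Type*) [TopologicalSpace A] (Z : Type*) [TopologicalSpace Z] : Prop :=
  ∀ C : Set A, IsClosed C → ∀ f : C → Z, Continuous f →
    ∃ F : A → Z, Continuous F ∧ ∀ c : C, F c = f c

section Aux

attribute [local instance] Classical.propDecidable

variable {X Z : Type*} [TopologicalSpace X] [TopologicalSpace Z]

theorem pasteOn {s t : Set X} {p q F : X → Z} (hs : IsClosed s) (ht : IsClosed t)
    (hp : ContinuousOn p s) (hq : ContinuousOn q t)
    (hpq : ∀ x ∈ s ∩ t, p x = q x)
    (hF1 : ∀ x ∈ s, F x = p x) (hF2 : ∀ x, x ∉ s → F x = q x) :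
    ContinuousOn F (s ∪ t) := by
  rw [continuousOn_iff_isClosed]
  intro K hK
  obtain ⟨u₁, hu₁, e₁⟩ := continuousOn_iff_isClosed.mp hp K hK
  obtain ⟨u₂, hu₂, e₂⟩ := continuousOn_iff_isClosed.mp hq K hK
  refine ⟨u₁ ∩ s ∪ u₂ ∩ t, (hu₁.inter hs).union (hu₂.inter ht), ?_⟩
  ext x
  constructor
  · rintro ⟨hxK, hxst⟩
    refine ⟨?_, hxst⟩
    by_cases hxs : x ∈ s
    · left
      exact (Set.ext_iff.mp e₁ x).mp ⟨by rw [Set.mem_preimage, ← hF1 x hxs]; exact hxK, hxs⟩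
    · right
      have hxt : x ∈ t := hxst.resolve_left hxs
      exact (Set.ext_iff.mp e₂ x).mp ⟨by rw [Set.mem_preimage, ← hF2 x hxs]; exact hxK, hxt⟩
  · rintro ⟨hW, hxst⟩
    refine ⟨?_, hxst⟩
    rcases hW with h1 | h2
    · have := (Set.ext_iff.mp e₁ x).mpr h1
      show F x ∈ K
      rw [hF1 x this.2]
      exact this.1
    · have := (Set.ext_iff.mp e₂ x).mpr h2
      show F x ∈ K
      by_cases hxs : x ∈ s
      · rw [hF1 x hxs, hpq x ⟨hxs, this.2⟩]
        exact this.1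
      · rw [hF2 x hxs]
        exact this.1

noncomputable def extOf [Nonempty Z] (hXZ : DimType X Z) (A : Set X) (H : X → Z) : X → Z :=
  if h : IsClosed A ∧ ContinuousOn H A then
    Classical.choose (hXZ A h.1 (A.restrict H) (continuousOn_iff_continuous_restrict.mp h.2))
  else fun _ => Classical.arbitrary Z

theorem extOf_spec [Nonempty Z] (hXZ : DimType X Z) {A : Set X} {H : X → Z}
    (hA : IsClosed A) (hH : ContinuousOn H A) :
    Continuous (extOf hXZ A H) ∧ ∀ x ∈ A, extOf hXZ A H x = H x := by
  unfold extOf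
  rw [dif_pos ⟨hA, hH⟩]
  have hr := continuousOn_iff_continuous_restrict.mp hH
  exact ⟨(Classical.choose_spec (hXZ A hA (A.restrict H) hr)).1,
    fun x hx => (Classical.choose_spec (hXZ A hA (A.restrict H) hr)).2 ⟨x, hx⟩⟩

variable {G : Type*}

noncomputable def psiF [Nonempty Z] (R : List G → List G → Prop) (act : G → X → Option X)
    (hXZ : DimType X Z) (C : Set (PGlob R act)) (f : C → Z) : List G → X → Z
  | [] => extOf hXZ {x : X | PGlob.mk R act ([], x) ∈ C}
      (fun x => if h : PGlob.mk R act ([], x) ∈ C then f ⟨_, h⟩ else Classical.arbitrary Z)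
  | g :: t => extOf hXZ
      ({x : X | (act g x).isSome} ∪ {x : X | PGlob.mk R act (t.reverse ++ [g], x) ∈ C})
      (fun x => if (act g x).isSome then psiF R act hXZ C f t ((act g x).getD x)
        else if h : PGlob.mk R act (t.reverse ++ [g], x) ∈ C then f ⟨_, h⟩
        else Classical.arbitrary Z)

end Aux

/-- For a closed confluent continuous partial action on `X` (all domains
`dom(u)` closed), if `X` has dimensional type `Z` then so does the topological
globalization `Y`. -/
theorem stmt_15 {G X Z : Type*} [TopologicalSpace X] [TopologicalSpace Z]
    (R : List G → List G → Prop) (act : G → X → Option X)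
    (hnoeth : WellFounded (fun w₁ w₂ : List G => MStep R w₂ w₁))
    (hconfM : ∀ w s₁ s₂ : List G, Relation.ReflTransGen (MStep R) w s₁ →
      Relation.ReflTransGen (MStep R) w s₂ →
      ∃ t, Relation.ReflTransGen (MStep R) s₁ t ∧ Relation.ReflTransGen (MStep R) s₂ t)
    (hnosingle : ∀ (g : G) (r : List G), ¬ R [g] r)
    (hconfP : ∀ p q₁ q₂ : List G × X, Relation.ReflTransGen (PStep R act) p q₁ →
      Relation.ReflTransGen (PStep R act) p q₂ →
      ∃ t, Relation.ReflTransGen (PStep R act) q₁ t ∧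
        Relation.ReflTransGen (PStep R act) q₂ t)
    (hcont : ∀ g : G, ContinuousOn (fun x => (act g x).getD x) {x | (act g x).isSome})
    (hclosed : ∀ w : List G,
      IsClosed {x : X | ∃ y, Relation.ReflTransGen (PStep R act) (w, x) ([], y)})
    (hXZ : DimType X Z) :
    DimType (PGlob R act) Z := by
  classical
  intro C hC f hf
  by_cases hXne : Nonempty X
  case neg =>
    have hYempty : IsEmpty (PGlob R act) := by
      constructor
      intro y
      exact Quot.ind (β := fun _ => False) (fun p => hXne ⟨p.2⟩) y
    refine ⟨fun y => (hYempty.false y).elim, ?_, fun c => (hYempty.false c.1).elim⟩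
    rw [continuous_def]
    intro s _
    rw [Set.eq_empty_of_isEmpty ((fun y => (hYempty.false y).elim) ⁻¹' s)]
    exact isOpen_empty
  case pos =>
  obtain ⟨x₀⟩ := hXne
  have hZne : Nonempty Z := by
    by_contra hz
    haveI : IsEmpty Z := not_nonempty_iff.mp hz
    have hfe : Continuous (fun c : (∅ : Set X) => (absurd c.2 (Set.notMem_empty c.1) : Z)) := by
      rw [continuous_def]
      intro s _
      rw [Set.eq_empty_of_isEmpty
        ((fun c : (∅ : Set X) => (absurd c.2 (Set.notMem_empty c.1) : Z)) ⁻¹' s)]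
      exact isOpen_empty
    obtain ⟨F, -, -⟩ := hXZ ∅ isClosed_empty _ hfe
    exact IsEmpty.false (F x₀)
  haveI := hZne
  -- continuity of the canonical maps X → Y
  have hj : ∀ w : List G, Continuous (fun x : X => PGlob.mk R act (w, x)) := by
    intro w
    exact continuous_iSup_rng continuous_coinduced_rng
  have hCw : ∀ w : List G, IsClosed {x : X | PGlob.mk R act (w, x) ∈ C} :=
    fun w => hC.preimage (hj w)
  -- no rule has empty left-hand side
  have hempty : ∀ r : List G, ¬ R [] r := by
    intro r hr
    exact hnoeth.induction (C := fun _ => False) []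
      (fun w ih => ih (w ++ r) ⟨w, [], r, [], hr, by simp, by simp⟩)
  -- domains of generators are closed
  have hdom : ∀ g : G, IsClosed {x : X | (act g x).isSome} := by
    intro g
    have h := hclosed [g]
    have e : {x : X | ∃ y, Relation.ReflTransGen (PStep R act) ([g], x) ([], y)}
        = {x : X | (act g x).isSome} := by
      ext x
      simp only [Set.mem_setOf_eq]
      constructor
      · rintro ⟨y, hy⟩
        rcases Relation.ReflTransGen.cases_head hy with h0 | ⟨c, hstep, -⟩
        · exact absurd (congrArg Prod.fst h0) (by simp)
        · rcases hstep with ⟨⟨a, l, r, b, hR, h1, -⟩, -⟩ | ⟨w, g', y', h1, hact, -, -⟩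
          · exfalso
            rcases a with _ | ⟨a', a''⟩
            · rcases l with _ | ⟨g'', l'⟩
              · exact hempty r hR
              · simp only [List.nil_append, List.cons_append, List.cons.injEq] at h1
                obtain ⟨rfl, h1'⟩ := h1
                obtain ⟨rfl, -⟩ := List.append_eq_nil_iff.mp h1'.symm
                exact hnosingle _ r hR
            · simp only [List.cons_append, List.cons.injEq] at h1
              obtain ⟨-, h1'⟩ := h1
              obtain ⟨-, rfl⟩ := List.append_eq_nil_iff.mp (List.append_eq_nil_iff.mp h1'.symm).1
              exact hempty r hR
          · have hw : w = [] := by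
              have hl := congrArg List.length h1
              simp only [List.length_append, List.length_singleton, List.length_cons,
                List.length_nil] at hl
              exact List.eq_nil_of_length_eq_zero (by omega)
            subst hw
            simp only [List.nil_append, List.cons.injEq] at h1
            obtain ⟨rfl, -⟩ := h1
            rw [hact]
            rfl
      · intro hx
        obtain ⟨y, hy⟩ := Option.isSome_iff_exists.mp hx
        exact ⟨y, Relation.ReflTransGen.single (Or.inr ⟨[], g, y, rfl, hy, rfl, rfl⟩)⟩
    rw [← e]
    exact h
  -- normal words have normal proper prefixes
  have hpre : ∀ (w : List G) (g : G), (∀ v, ¬ MStep R (w ++ [g]) v) → ∀ v, ¬ MStep R w v := by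
    rintro w g hn v ⟨a, l, r, b, hR, h1, h2⟩
    exact hn (a ++ r ++ (b ++ [g])) ⟨a, l, r, b ++ [g], hR, by rw [h1]; simp, by simp⟩
  -- existence of normal forms of words
  have hNF : ∀ w : List G, ∃ u, Relation.ReflTransGen (MStep R) w u ∧ ∀ v, ¬ MStep R u v :=
    fun w => hnoeth.induction
      (C := fun w => ∃ u, Relation.ReflTransGen (MStep R) w u ∧ ∀ v, ¬ MStep R u v) w
      (fun w ih => by
        by_cases h : ∃ w', MStep R w w'
        · obtain ⟨w', hw'⟩ := h
          obtain ⟨u, hu1, hu2⟩ := ih w' hw'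
          exact ⟨u, Relation.ReflTransGen.head hw' hu1, hu2⟩
        · exact ⟨w, Relation.ReflTransGen.refl, fun v hv => h ⟨v, hv⟩⟩)
  have hRT2E : ∀ p q : List G × X, Relation.ReflTransGen (PStep R act) p q →
      Relation.EqvGen (PStep R act) p q := by
    intro p q h
    induction h with
    | refl => exact Relation.EqvGen.refl p
    | tail h1 h2 ih => exact Relation.EqvGen.trans _ _ _ ih (Relation.EqvGen.rel _ _ h2)
  -- Church–Rosser
  have hCR : ∀ p q : List G × X, Relation.EqvGen (PStep R act) p q →
      ∃ t, Relation.ReflTransGen (PStep R act) p t ∧ Relation.ReflTransGen (PStep R act) q t := by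
    intro p q h
    induction h with
    | rel a b hab => exact ⟨b, Relation.ReflTransGen.single hab, Relation.ReflTransGen.refl⟩
    | refl a => exact ⟨a, Relation.ReflTransGen.refl, Relation.ReflTransGen.refl⟩
    | symm a b _ ih => exact ⟨ih.choose, ih.choose_spec.2, ih.choose_spec.1⟩
    | trans a b c _ _ ih1 ih2 =>
      obtain ⟨s, has, hbs⟩ := ih1
      obtain ⟨t, hbt, hct⟩ := ih2
      obtain ⟨m, hsm, htm⟩ := hconfP b s t hbs hbt
      exact ⟨m, has.trans hsm, hct.trans htm⟩
  -- continuity of the C-branch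
  have cbranch : ∀ w : List G, ContinuousOn (fun x : X =>
      if h : PGlob.mk R act (w, x) ∈ C then f ⟨_, h⟩ else Classical.arbitrary Z)
      {x : X | PGlob.mk R act (w, x) ∈ C} := by
    intro w
    rw [continuousOn_iff_continuous_restrict]
    have e : Set.restrict {x : X | PGlob.mk R act (w, x) ∈ C}
        (fun x : X => if h : PGlob.mk R act (w, x) ∈ C then f ⟨_, h⟩ else Classical.arbitrary Z)
        = f ∘ (fun y : {x : X | PGlob.mk R act (w, x) ∈ C} =>
            (⟨PGlob.mk R act (w, y.1), y.2⟩ : C)) := by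
      funext y
      simp only [Set.restrict_apply, Function.comp_apply]
      exact dif_pos y.2
    rw [show Set.domRestrict _ _ = _ from e]
    exact hf.comp (Continuous.subtype_mk ((hj w).comp continuous_subtype_val) _)
  -- the main invariants of psiF
  have inv : ∀ l : List G,
      Continuous (psiF R act hXZ C f l) ∧
      (∀ (x : X) (h : PGlob.mk R act (l.reverse, x) ∈ C),
        psiF R act hXZ C f l x = f ⟨PGlob.mk R act (l.reverse, x), h⟩) ∧
      (∀ (g : G) (t : List G) (x : X), l = g :: t → (act g x).isSome →
        psiF R act hXZ C f l x = psiF R act hXZ C f t ((act g x).getD x)) := by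
    intro l
    induction l with
    | nil =>
      obtain ⟨h1, h2⟩ := extOf_spec hXZ (hCw []) (cbranch [])
      refine ⟨?_, ?_, ?_⟩
      · simpa only [psiF] using h1
      · intro x hx
        simp only [List.reverse_nil] at hx ⊢
        simp only [psiF]
        rw [h2 x hx]
        try dsimp only
        rw [dif_pos hx]
      · intro g t x h
        exact absurd h (List.cons_ne_nil g t).symm
    | cons g t ih =>
      obtain ⟨ih1, ih2, ih3⟩ := ih
      have hkey : ∀ x : X, (act g x).isSome →
          ∀ h : PGlob.mk R act (t.reverse ++ [g], x) ∈ C,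
          psiF R act hXZ C f t ((act g x).getD x)
            = f ⟨PGlob.mk R act (t.reverse ++ [g], x), h⟩ := by
        intro x hx h
        obtain ⟨y, hy⟩ := Option.isSome_iff_exists.mp hx
        have hgd : (act g x).getD x = y := by rw [hy]; rfl
        have hcls : PGlob.mk R act (t.reverse ++ [g], x) = PGlob.mk R act (t.reverse, y) :=
          Quot.sound (Relation.EqvGen.rel _ _ (Or.inr ⟨t.reverse, g, y, rfl, hy, rfl, rfl⟩))
        have hmem : PGlob.mk R act (t.reverse, y) ∈ C := hcls ▸ h
        rw [hgd, ih2 y hmem]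
        exact congrArg f (Subtype.ext hcls.symm)
      have hA : IsClosed ({x : X | (act g x).isSome}
          ∪ {x : X | PGlob.mk R act (t.reverse ++ [g], x) ∈ C}) :=
        (hdom g).union (hCw (t.reverse ++ [g]))
      have hH : ContinuousOn (fun x : X =>
          if (act g x).isSome then psiF R act hXZ C f t ((act g x).getD x)
          else if h : PGlob.mk R act (t.reverse ++ [g], x) ∈ C then f ⟨_, h⟩
          else Classical.arbitrary Z)
          ({x : X | (act g x).isSome} ∪ {x : X | PGlob.mk R act (t.reverse ++ [g], x) ∈ C}) := by
        refine pasteOn (hdom g) (hCw (t.reverse ++ [g]))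
          (p := fun x => psiF R act hXZ C f t ((act g x).getD x))
          (q := fun x => if h : PGlob.mk R act (t.reverse ++ [g], x) ∈ C then f ⟨_, h⟩
            else Classical.arbitrary Z)
          (ih1.comp_continuousOn (hcont g)) (cbranch (t.reverse ++ [g])) ?_ ?_ ?_
        · rintro x ⟨hx1, hx2⟩
          simp only [Set.mem_setOf_eq] at hx1 hx2
          rw [dif_pos hx2]
          exact hkey x hx1 hx2
        · intro x hx
          simp only [Set.mem_setOf_eq] at hx
          rw [if_pos hx]
        · intro x hx
          simp only [Set.mem_setOf_eq] at hx
          rw [if_neg hx]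
      obtain ⟨h1, h2⟩ := extOf_spec hXZ hA hH
      refine ⟨?_, ?_, ?_⟩
      · simpa only [psiF] using h1
      · intro x hx
        simp only [List.reverse_cons] at hx ⊢
        simp only [psiF]
        rw [h2 x (Or.inr hx)]
        by_cases hg : (act g x).isSome
        · rw [if_pos hg]
          exact hkey x hg hx
        · rw [if_neg hg, dif_pos hx]
      · intro g' t' x heq hsome
        obtain ⟨rfl, rfl⟩ : g = g' ∧ t = t' := by
          injection heq with e1 e2
          exact ⟨e1, e2⟩
        simp only [psiF]
        rw [h2 x (Or.inl hsome)]
        try dsimp only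
        rw [if_pos hsome]
  -- psiF is invariant along reductions starting from a normal word
  have hstep : ∀ (q p : List G × X), Relation.ReflTransGen (PStep R act) p q →
      (∀ v, ¬ MStep R p.1 v) →
      psiF R act hXZ C f p.1.reverse p.2 = psiF R act hXZ C f q.1.reverse q.2 := by
    intro q p h
    induction h using Relation.ReflTransGen.head_induction_on with
    | refl => intro _; rfl
    | @head a c h' hrest ih =>
      intro hna
      rcases h' with ⟨hm, -⟩ | ⟨w, g, y, h1, hact, h2, h3⟩
      · exact absurd hm (hna _)
      · have hnw : ∀ v, ¬ MStep R w v := hpre w g (by rw [← h1]; exact hna)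
        have hnc : ∀ v, ¬ MStep R c.1 v := by rw [h2]; exact hnw
        have hrec := ih hnc
        have hsome : (act g a.2).isSome := by rw [hact]; rfl
        have e1 : a.1.reverse = g :: w.reverse := by rw [h1]; simp
        calc psiF R act hXZ C f a.1.reverse a.2
            = psiF R act hXZ C f w.reverse ((act g a.2).getD a.2) := by
              rw [e1]
              exact (inv (g :: w.reverse)).2.2 g w.reverse a.2 rfl hsome
          _ = psiF R act hXZ C f c.1.reverse c.2 := by
              rw [h2, h3, hact]
              rfl
          _ = psiF R act hXZ C f q.1.reverse q.2 := hrec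
  -- compatibility: psiF only depends on the class, for normal words
  have hcompat : ∀ (u : List G) (x : X) (u' : List G) (x' : X),
      (∀ v, ¬ MStep R u v) → (∀ v, ¬ MStep R u' v) →
      Relation.EqvGen (PStep R act) (u, x) (u', x') →
      psiF R act hXZ C f u.reverse x = psiF R act hXZ C f u'.reverse x' := by
    intro u x u' x' hu hu' h
    obtain ⟨t, h1, h2⟩ := hCR _ _ h
    exact (hstep t (u, x) h1 hu).trans (hstep t (u', x') h2 hu').symm
  choose N hN1 hN2 using hNF
  have hlift : ∀ (w w' : List G) (x : X), Relation.ReflTransGen (MStep R) w w' →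
      Relation.ReflTransGen (PStep R act) (w, x) (w', x) :=
    fun w w' x h =>
      by
        induction h with
        | refl => exact Relation.ReflTransGen.refl
        | tail _ hab ih => exact ih.tail (Or.inl ⟨hab, rfl⟩)
  have hsound : ∀ p q : List G × X, Relation.EqvGen (PStep R act) p q →
      psiF R act hXZ C f (N p.1).reverse p.2 = psiF R act hXZ C f (N q.1).reverse q.2 := by
    intro p q h
    apply hcompat _ _ _ _ (hN2 p.1) (hN2 q.1)
    have e1 : Relation.EqvGen (PStep R act) (N p.1, p.2) (p.1, p.2) :=
      Relation.EqvGen.symm _ _ (hRT2E _ _ (hlift _ _ _ (hN1 p.1)))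
    have e2 : Relation.EqvGen (PStep R act) (p.1, p.2) (q.1, q.2) := h
    have e3 : Relation.EqvGen (PStep R act) (q.1, q.2) (N q.1, q.2) :=
      hRT2E _ _ (hlift _ _ _ (hN1 q.1))
    exact Relation.EqvGen.trans _ _ _ (Relation.EqvGen.trans _ _ _ e1 e2) e3
  refine ⟨Quot.lift (fun p : List G × X => psiF R act hXZ C f (N p.1).reverse p.2) hsound,
    ?_, ?_⟩
  · exact continuous_iSup_dom.mpr
      (fun w => continuous_coinduced_dom.mpr ((inv (N w).reverse).1))
  · intro c
    obtain ⟨p, hp⟩ := Quot.exists_rep (c : PGlob R act)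
    have hcls : PGlob.mk R act (N p.1, p.2) = (c : PGlob R act) := by
      rw [← hp]
      exact Quot.sound (Relation.EqvGen.symm _ _ (hRT2E _ _ (hlift _ _ _ (hN1 p.1))))
    have hmem : PGlob.mk R act ((N p.1).reverse.reverse, p.2) ∈ C := by
      rw [List.reverse_reverse, hcls]
      exact c.2
    have hval := (inv ((N p.1).reverse)).2.1 p.2 hmem
    have e0 : Quot.lift (fun p : List G × X => psiF R act hXZ C f (N p.1).reverse p.2) hsound
        (c : PGlob R act) = psiF R act hXZ C f (N p.1).reverse p.2 := by
      exact (congrArg (Quot.lift (fun p : List G × X => psiF R act hXZ C f (N p.1).reverse p.2)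
        hsound) hp).symm
    rw [e0, hval]
    refine congrArg f (Subtype.ext ?_)
    show PGlob.mk R act ((N p.1).reverse.reverse, p.2) = (c : PGlob R act)
    rw [List.reverse_reverse]
    exact hcls
end

section
/- Let α be a confluent non-expansive partial action of a monoid M on a weak pseudometric space X. Then the canonical map X → Y into the weak-pseudometric globalization Y is isometric: D([e,x],[e,y]) = d(x,y) for all x, y ∈ X. -/
open scoped ENNReal

namespace S17

variable {G X : Type*} {R : List G → List G → Prop} {act : G → X → Option X}

/-- Reflexive-transitive closure of `PStep`. -/
abbrev Red (R : List G → List G → Prop) (act : G → X → Option X) :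
    List G × X → List G × X → Prop := Relation.ReflTransGen (PStep R act)

/-- Normal points. -/
def Nrm (R : List G → List G → Prop) (act : G → X → Option X) (p : List G × X) : Prop :=
  ∀ q, ¬ PStep R act p q

/-- Word-level well-founded order: one MStep backwards, or popping the last letter. -/
def Qrel (R : List G → List G → Prop) : List G → List G → Prop :=
  fun w₁ w₂ => MStep R w₂ w₁ ∨ ∃ g : G, w₂ = w₁ ++ [g]

lemma mstep_append {w₁ w₂ : List G} (h : MStep R w₁ w₂) (g : G) :
    MStep R (w₁ ++ [g]) (w₂ ++ [g]) := by
  obtain ⟨a, l, r, b, hr, h1, h2⟩ := h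
  exact ⟨a, l, r, b ++ [g], hr, by simp [h1], by simp [h2]⟩

lemma no_R_nil (hnoeth : WellFounded (fun w₁ w₂ : List G => MStep R w₂ w₁)) (r : List G) :
    ¬ R [] r := by
  intro hr
  let f : ℕ → List G := fun n => Nat.rec [] (fun _ w => w ++ r) n
  have hstep : ∀ n, MStep R (f n) (f (n + 1)) := by
    intro n
    exact ⟨f n, [], r, [], hr, by simp, by simp [f]⟩
  have key : ∀ w, Acc (fun w₁ w₂ : List G => MStep R w₂ w₁) w → ∀ n, f n = w → False := by
    intro w hacc
    induction hacc with
    | intro w _ ih =>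
      intro n hn
      exact ih (f (n + 1)) (hn ▸ hstep n) (n + 1) rfl
  exact key (f 0) (hnoeth.apply _) 0 rfl

lemma rank_append_le (hnoeth : WellFounded (fun w₁ w₂ : List G => MStep R w₂ w₁)) :
    ∀ w : List G, ∀ g : G, (hnoeth.apply w).rank ≤ (hnoeth.apply (w ++ [g])).rank := by
  intro w
  induction w using hnoeth.induction with
  | _ w IH =>
    intro g
    rw [(hnoeth.apply w).rank_eq]
    refine Ordinal.iSup_le fun b => ?_
    obtain ⟨b, hb⟩ := b
    -- hb : MStep R w b
    have h1 : (hnoeth.apply (b ++ [g])).rank < (hnoeth.apply (w ++ [g])).rank :=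
      Acc.rank_lt_of_rel (hnoeth.apply _) (mstep_append hb g)
    exact Order.succ_le_of_lt (lt_of_le_of_lt (IH b hb g) h1)

lemma wf_Qrel (hnoeth : WellFounded (fun w₁ w₂ : List G => MStep R w₂ w₁)) :
    WellFounded (Qrel (G := G) R) := by
  have hsub : Subrelation (Qrel (G := G) R)
      (InvImage (Prod.Lex (· < ·) (· < ·))
        (fun w : List G => ((hnoeth.apply w).rank, w.length))) := by
    intro w₁ w₂ h
    rcases h with hm | ⟨g, hg⟩
    · exact Prod.Lex.left _ _ (Acc.rank_lt_of_rel (hnoeth.apply _) hm)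
    · subst hg
      rcases lt_or_eq_of_le (rank_append_le hnoeth w₁ g) with hlt | heq
      · exact Prod.Lex.left _ _ hlt
      · show Prod.Lex ((· < ·)) ((· < ·)) ((hnoeth.apply w₁).rank, w₁.length)
            ((hnoeth.apply (w₁ ++ [g])).rank, (w₁ ++ [g]).length)
        rw [← heq]
        exact Prod.Lex.right _ (by simp)
  exact Subrelation.wf hsub (InvImage.wf _ (WellFounded.prod_lex wellFounded_lt wellFounded_lt))

lemma pstep_qrel {p q : List G × X} (h : PStep R act p q) : Qrel R q.1 p.1 := by
  rcases h with ⟨hm, _⟩ | ⟨w, g, y, h1, _, h3, _⟩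
  · exact Or.inl hm
  · exact Or.inr ⟨g, by rw [h1, h3]⟩

lemma wf_pstep (hnoeth : WellFounded (fun w₁ w₂ : List G => MStep R w₂ w₁)) :
    WellFounded (fun q p : List G × X => PStep R act p q) :=
  Subrelation.wf (fun {q p} h => pstep_qrel h) (InvImage.wf Prod.fst (wf_Qrel hnoeth))

lemma exists_nf (hnoeth : WellFounded (fun w₁ w₂ : List G => MStep R w₂ w₁))
    (p : List G × X) : ∃ n, Red R act p n ∧ Nrm R act n := by
  induction p using (wf_pstep (act := act) hnoeth).induction with
  | _ p ih =>
    by_cases h : ∃ q, PStep R act p q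
    · obtain ⟨q, hq⟩ := h
      obtain ⟨n, h1, h2⟩ := ih q hq
      exact ⟨n, Relation.ReflTransGen.head hq h1, h2⟩
    · exact ⟨p, Relation.ReflTransGen.refl, fun q hq => h ⟨q, hq⟩⟩

lemma nrm_red_eq {p q : List G × X} (h : Red R act p q) (hn : Nrm R act p) : q = p := by
  rcases h.cases_head with heq | ⟨c, hc, _⟩
  · exact heq.symm
  · exact absurd hc (hn c)

end S17
namespace S17

variable {G X : Type*} {R : List G → List G → Prop} {act : G → X → Option X}

lemma eqv_joins
    (hconfP : ∀ p q₁ q₂ : List G × X, Red R act p q₁ → Red R act p q₂ →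
      ∃ t, Red R act q₁ t ∧ Red R act q₂ t)
    {p q : List G × X} (h : Relation.EqvGen (PStep R act) p q) :
    ∃ t, Red R act p t ∧ Red R act q t := by
  induction h with
  | rel a b h => exact ⟨b, Relation.ReflTransGen.single h, Relation.ReflTransGen.refl⟩
  | refl a => exact ⟨a, Relation.ReflTransGen.refl, Relation.ReflTransGen.refl⟩
  | symm a b _ ih => obtain ⟨t, h1, h2⟩ := ih; exact ⟨t, h2, h1⟩
  | trans a b c _ _ ih1 ih2 =>
      obtain ⟨t1, ha, hb⟩ := ih1
      obtain ⟨t2, hb', hc⟩ := ih2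
      obtain ⟨t, h1, h2⟩ := hconfP b t1 t2 hb hb'
      exact ⟨t, ha.trans h1, hc.trans h2⟩

lemma red_nrm_of_red_red
    (hconfP : ∀ p q₁ q₂ : List G × X, Red R act p q₁ → Red R act p q₂ →
      ∃ t, Red R act q₁ t ∧ Red R act q₂ t)
    {p q n : List G × X} (h1 : Red R act p q) (h2 : Red R act p n)
    (hn : Nrm R act n) : Red R act q n := by
  obtain ⟨t, ha, hb⟩ := hconfP p q n h1 h2
  rwa [nrm_red_eq hb hn] at ha

lemma red_of_mk_eq_nrm
    (hconfP : ∀ p q₁ q₂ : List G × X, Red R act p q₁ → Red R act p q₂ →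
      ∃ t, Red R act q₁ t ∧ Red R act q₂ t)
    {p q : List G × X} (h : PGlob.mk R act p = PGlob.mk R act q)
    (hq : Nrm R act q) : Red R act p q := by
  have heqv : Relation.EqvGen (PStep R act) p q :=
    ((Relation.EqvGen.is_equivalence _).eqvGen_iff).mp (Quot.eq.mp h)
  obtain ⟨t, h1, h2⟩ := eqv_joins hconfP heqv
  rwa [nrm_red_eq h2 hq] at h1

lemma mk_eq_of_red {p q : List G × X} (h : Red R act p q) :
    PGlob.mk R act p = PGlob.mk R act q := by
  induction h with
  | refl => rfl
  | tail _ h ih => exact ih.trans (Quot.sound (Relation.EqvGen.rel _ _ h))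

lemma nrm_nil (hnoeth : WellFounded (fun w₁ w₂ : List G => MStep R w₂ w₁)) (z : X) :
    Nrm R act (([] : List G), z) := by
  intro q hq
  rcases hq with ⟨hm, _⟩ | ⟨w, g, y, h1, _, _, _⟩
  · obtain ⟨a, l, r, b, hr, h1, _⟩ := hm
    have h1' : a ++ (l ++ b) = [] := by simpa using h1.symm
    rcases List.append_eq_nil_iff.mp h1' with ⟨rfl, h2⟩
    rcases List.append_eq_nil_iff.mp h2 with ⟨rfl, rfl⟩
    exact no_R_nil hnoeth r hr
  · simp at h1

lemma red_qrel {p q : List G × X} (h : Red R act p q) :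
    Relation.ReflTransGen (Qrel (G := G) R) q.1 p.1 := by
  induction h with
  | refl => exact Relation.ReflTransGen.refl
  | tail _ hs ih => exact Relation.ReflTransGen.head (pstep_qrel hs) ih

lemma transGen_word {p q : List G × X} (h : Red R act p q) (hp : ¬ Nrm R act p)
    (hq : Nrm R act q) : Relation.TransGen (Qrel (G := G) R) q.1 p.1 := by
  rcases h.cases_head with heq | ⟨c, hc, htail⟩
  · exact absurd (heq ▸ hq) hp
  · exact Relation.TransGen.tail' (red_qrel htail) (pstep_qrel hc)

/-- Parallel transport along a reduction to a normal form. -/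
lemma transport {d : X → X → ℝ≥0∞}
    (hnoeth : WellFounded (fun w₁ w₂ : List G => MStep R w₂ w₁))
    (hconfP : ∀ p q₁ q₂ : List G × X, Red R act p q₁ → Red R act p q₂ →
      ∃ t, Red R act q₁ t ∧ Red R act q₂ t)
    (hnonexp : ∀ (g : G) (x y x' y' : X), act g x = some x' → act g y = some y' →
      d x' y' ≤ d x y) :
    ∀ w : List G, ∀ a : X, ∀ n : List G × X, Red R act (w, a) n → Nrm R act n → ∀ b : X,
    (∃ b', Red R act (w, b) (n.1, b') ∧ d n.2 b' ≤ d a b) ∨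
    (∃ (ρ : List G) (h : G) (a' b' : X), Red R act (w, a) (ρ ++ [h], a') ∧
      Red R act (ρ ++ [h], a') n ∧ Red R act (w, b) (ρ ++ [h], b') ∧
      Nrm R act (ρ ++ [h], b') ∧ d a' b' ≤ d a b) := by
  intro w
  induction w using (wf_Qrel hnoeth).induction with
  | _ w IH =>
    intro a n hred hn b
    rcases hred.cases_head with heq | ⟨p₁, hstep, htail⟩
    · subst heq
      exact Or.inl ⟨b, Relation.ReflTransGen.refl, le_refl _⟩
    · rcases hstep with ⟨hm, heq2⟩ | ⟨pw, g, py, hw, hact, hq1, hq2⟩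
      · -- MStep on the word
        obtain ⟨w₂, a₂⟩ := p₁
        simp only at heq2 hm
        subst heq2
        rcases IH w₂ (Or.inl hm) a n htail hn b with ⟨b', h1, h2⟩ |
          ⟨ρ, h, a', b', h1, h2, h3, h4, h5⟩
        · exact Or.inl ⟨b', Relation.ReflTransGen.head
            (show PStep R act (w, b) (w₂, b) from Or.inl ⟨hm, rfl⟩) h1, h2⟩
        · exact Or.inr ⟨ρ, h, a', b', Relation.ReflTransGen.head
            (show PStep R act (w, a) (w₂, a) from Or.inl ⟨hm, rfl⟩) h1, h2,
            Relation.ReflTransGen.head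
              (show PStep R act (w, b) (w₂, b) from Or.inl ⟨hm, rfl⟩) h3, h4, h5⟩
      · -- action step available
        by_cases hM : ∃ w₂, MStep R w w₂
        · obtain ⟨w₂, hm⟩ := hM
          have hred2 : Red R act (w₂, a) n :=
            red_nrm_of_red_red hconfP
              (Relation.ReflTransGen.single
                (show PStep R act (w, a) (w₂, a) from Or.inl ⟨hm, rfl⟩)) hred hn
          rcases IH w₂ (Or.inl hm) a n hred2 hn b with ⟨b', h1, h2⟩ |
            ⟨ρ, h, a', b', h1, h2, h3, h4, h5⟩
          · exact Or.inl ⟨b', Relation.ReflTransGen.head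
              (show PStep R act (w, b) (w₂, b) from Or.inl ⟨hm, rfl⟩) h1, h2⟩
          · exact Or.inr ⟨ρ, h, a', b', Relation.ReflTransGen.head
              (show PStep R act (w, a) (w₂, a) from Or.inl ⟨hm, rfl⟩) h1, h2,
              Relation.ReflTransGen.head
                (show PStep R act (w, b) (w₂, b) from Or.inl ⟨hm, rfl⟩) h3, h4, h5⟩
        · obtain ⟨p₁w, p₁y⟩ := p₁
          simp only at hq1 hq2 hw hact
          subst hq1
          subst hq2
          -- now: hw : w = p₁w ++ [g], hact : act g a = some p₁y, htail : Red (p₁w, p₁y) n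
          rcases hb : act g b with _ | b₁
          · -- stuck
            subst hw
            refine Or.inr ⟨p₁w, g, a, b, Relation.ReflTransGen.refl, hred,
              Relation.ReflTransGen.refl, ?_, le_refl _⟩
            intro q hq
            rcases hq with ⟨hm', _⟩ | ⟨w'', g'', y'', h1, h2, _, _⟩
            · exact hM ⟨q.1, hm'⟩
            · simp only at h1 h2
              obtain ⟨rfl, hg⟩ := List.append_inj' h1 rfl
              obtain rfl : g = g'' := by simpa using hg
              rw [hb] at h2; exact nomatch h2
          · -- both act
            have hdy : d p₁y b₁ ≤ d a b := hnonexp g a b p₁y b₁ hact hb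
            rcases IH p₁w (Or.inr ⟨g, hw⟩) p₁y n htail hn b₁ with ⟨b', h1, h2⟩ |
              ⟨ρ, h, a', b', h1, h2, h3, h4, h5⟩
            · exact Or.inl ⟨b', Relation.ReflTransGen.head
                (show PStep R act (w, b) (p₁w, b₁) from
                  Or.inr ⟨p₁w, g, b₁, hw, hb, rfl, rfl⟩) h1, h2.trans hdy⟩
            · exact Or.inr ⟨ρ, h, a', b',
                Relation.ReflTransGen.head
                  (show PStep R act (w, a) (p₁w, p₁y) from
                    Or.inr ⟨p₁w, g, p₁y, hw, hact, rfl, rfl⟩) h1, h2,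
                Relation.ReflTransGen.head
                  (show PStep R act (w, b) (p₁w, b₁) from
                    Or.inr ⟨p₁w, g, b₁, hw, hb, rfl, rfl⟩) h3, h4,
                h5.trans hdy⟩

/-- Key lemma: reduction to the empty word is jointly non-expansive. -/
lemma corB {d : X → X → ℝ≥0∞}
    (hnoeth : WellFounded (fun w₁ w₂ : List G => MStep R w₂ w₁))
    (hconfP : ∀ p q₁ q₂ : List G × X, Red R act p q₁ → Red R act p q₂ →
      ∃ t, Red R act q₁ t ∧ Red R act q₂ t)
    (hnonexp : ∀ (g : G) (x y x' y' : X), act g x = some x' → act g y = some y' →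
      d x' y' ≤ d x y)
    {w : List G} {a b x y : X} (h1 : Red R act (w, a) ([], x))
    (h2 : Red R act (w, b) ([], y)) : d x y ≤ d a b := by
  rcases transport hnoeth hconfP hnonexp w a ([], x) h1 (nrm_nil hnoeth x) b with
    ⟨b', hb, hd⟩ | ⟨ρ, h, a', b', _, _, h3, h4, _⟩
  · obtain ⟨t, ha, hb2⟩ := hconfP (w, b) ([], b') ([], y) hb h2
    have e1 := nrm_red_eq ha (nrm_nil hnoeth b')
    have e2 := nrm_red_eq hb2 (nrm_nil hnoeth y)
    obtain rfl : b' = y := by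
      have := e1.symm.trans e2
      simpa using this
    exact hd
  · exfalso
    obtain ⟨t, ha, hb2⟩ := hconfP (w, b) (ρ ++ [h], b') ([], y) h3 h2
    have e1 := nrm_red_eq ha h4
    have e2 := nrm_red_eq hb2 (nrm_nil hnoeth y)
    have := e1.symm.trans e2
    simp at this

end S17
namespace S17

variable {G X : Type*} {R : List G → List G → Prop} {act : G → X → Option X}

/-- An S-path: list of links `(w, u, v)`. -/
def ChainP (R : List G → List G → Prop) (act : G → X → Option X) :
    List (List G × X × X) → PGlob R act → PGlob R act → Prop
  | [], c, e => c = e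
  | l :: T, c, e => c = PGlob.mk R act (l.1, l.2.1) ∧
      ChainP R act T (PGlob.mk R act (l.1, l.2.2)) e

@[simp] lemma chainP_nil {c e : PGlob R act} : ChainP R act [] c e ↔ c = e := Iff.rfl

@[simp] lemma chainP_cons {l : List G × X × X} {T : List (List G × X × X)}
    {c e : PGlob R act} :
    ChainP R act (l :: T) c e ↔ c = PGlob.mk R act (l.1, l.2.1) ∧
      ChainP R act T (PGlob.mk R act (l.1, l.2.2)) e := Iff.rfl

/-- Total weight of a chain. -/
noncomputable def WC (d : X → X → ℝ≥0∞) (C : List (List G × X × X)) : ℝ≥0∞ :=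
  (C.map fun l => d l.2.1 l.2.2).sum

@[simp] lemma WC_nil {d : X → X → ℝ≥0∞} : WC d ([] : List (List G × X × X)) = 0 := rfl

@[simp] lemma WC_cons {d : X → X → ℝ≥0∞} {l : List G × X × X} {T : List (List G × X × X)} :
    WC d (l :: T) = d l.2.1 l.2.2 + WC d T := by simp [WC]

@[simp] lemma WC_append {d : X → X → ℝ≥0∞} {C₁ C₂ : List (List G × X × X)} :
    WC d (C₁ ++ C₂) = WC d C₁ + WC d C₂ := by simp [WC]

lemma chainP_append {C₁ C₂ : List (List G × X × X)} {c m e : PGlob R act}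
    (h1 : ChainP R act C₁ c m) (h2 : ChainP R act C₂ m e) :
    ChainP R act (C₁ ++ C₂) c e := by
  induction C₁ generalizing c with
  | nil => rw [chainP_nil] at h1; subst h1; exact h2
  | cons l T ih => exact ⟨h1.1, ih h1.2⟩

lemma chainP_split {C₁ C₂ : List (List G × X × X)} {c e : PGlob R act}
    (h : ChainP R act (C₁ ++ C₂) c e) :
    ∃ m, ChainP R act C₁ c m ∧ ChainP R act C₂ m e := by
  induction C₁ generalizing c with
  | nil => exact ⟨c, rfl, h⟩
  | cons l T ih =>
      obtain ⟨m, h1, h2⟩ := ih h.2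
      exact ⟨m, ⟨h.1, h1⟩, h2⟩

/-- Measure for the main induction. -/
def Mrel (R : List G → List G → Prop) : (ℕ × ℕ × List G) → (ℕ × ℕ × List G) → Prop :=
  Prod.Lex (· < ·) (Prod.Lex (· < ·) (Relation.TransGen (Qrel R)))

lemma wf_Mrel (hnoeth : WellFounded (fun w₁ w₂ : List G => MStep R w₂ w₁)) :
    WellFounded (Mrel (G := G) R) :=
  WellFounded.prod_lex wellFounded_lt
    (WellFounded.prod_lex wellFounded_lt (wf_Qrel hnoeth).transGen)

lemma lex1 {a1 a2 b1 b2 : ℕ} {c1 c2 : List G} (h : a1 < a2) :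
    Mrel R (a1, b1, c1) (a2, b2, c2) := Prod.Lex.left _ _ h

lemma lex2 {a1 a2 b1 b2 : ℕ} {c1 c2 : List G} (h1 : a1 = a2) (h2 : b1 < b2) :
    Mrel R (a1, b1, c1) (a2, b2, c2) := by
  subst h1; exact Prod.Lex.right _ (Prod.Lex.left _ _ h2)

lemma lex3 {a1 a2 b1 b2 : ℕ} {c1 c2 : List G} (h1 : a1 = a2) (h2 : b1 = b2)
    (h3 : Relation.TransGen (Qrel R) c1 c2) :
    Mrel R (a1, b1, c1) (a2, b2, c2) := by
  subst h1; subst h2; exact Prod.Lex.right _ (Prod.Lex.right _ h3)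

/-- Last word of a chain. -/
def lastw (C : List (List G × X × X)) : List G := (C.getLast?.elim [] (·.1))

@[simp] lemma lastw_concat {C : List (List G × X × X)} {l : List G × X × X} :
    lastw (C ++ [l]) = l.1 := by simp [lastw, List.getLast?_concat]

section Aux

variable {d : X → X → ℝ≥0∞}
variable (hnoeth : WellFounded (fun w₁ w₂ : List G => MStep R w₂ w₁))
variable (hconfP : ∀ p q₁ q₂ : List G × X, Red R act p q₁ → Red R act p q₂ →
      ∃ t, Red R act q₁ t ∧ Red R act q₂ t)
variable (hnonexp : ∀ (g : G) (x y x' y' : X), act g x = some x' → act g y = some y' →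
      d x' y' ≤ d x y)
variable (hdsymm : ∀ x y, d x y = d y x)
variable (hdtri : ∀ x y z, d x z ≤ d x y + d y z)

set_option maxHeartbeats 1000000 in
lemma aux_main
    (hnoeth : WellFounded (fun w₁ w₂ : List G => MStep R w₂ w₁))
    (hconfP : ∀ p q₁ q₂ : List G × X, Red R act p q₁ → Red R act p q₂ →
      ∃ t, Red R act q₁ t ∧ Red R act q₂ t)
    (hnonexp : ∀ (g : G) (x y x' y' : X), act g x = some x' → act g y = some y' →
      d x' y' ≤ d x y)
    (hdsymm : ∀ x y, d x y = d y x)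
    (hdtri : ∀ x y z, d x z ≤ d x y + d y z) :
    ∀ m : ℕ × ℕ × List G, ∀ C S : List (List G × X × X), ∀ x y : X, ∀ ω : List G,
      ∀ s t : X, ∀ B : ℝ≥0∞,
    m = (C.length + S.length, C.length, lastw C) →
    ChainP R act (C ++ S) (PGlob.mk R act ([], x)) (PGlob.mk R act (ω, t)) →
    (∀ L ∈ S, Nrm R act (L.1, L.2.1)) →
    Red R act (ω, s) ([], y) →
    d t s ≤ B →
    d x y ≤ WC d (C ++ S) + B := by
  intro m
  induction m using (wf_Mrel hnoeth).induction with
  | _ m IH =>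
  intro C S x y ω s t B hm hchain hS hys htB
  subst hm
  rcases List.eq_nil_or_concat C with rfl | ⟨C', L, hCC⟩
  · -- C = []
    cases S with
    | nil =>
      rw [List.append_nil, chainP_nil] at hchain
      have hred : Red R act (ω, t) ([], x) :=
        red_of_mk_eq_nrm hconfP hchain.symm (nrm_nil hnoeth x)
      have hxy : d x y ≤ d t s := corB hnoeth hconfP hnonexp hred hys
      simpa using hxy.trans htB
    | cons L₂ S' =>
      obtain ⟨w₂, u₂, v₂⟩ := L₂
      rw [List.nil_append, chainP_cons] at hchain
      obtain ⟨h1, h2⟩ := hchain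
      have hn2 : Nrm R act (w₂, u₂) := hS _ List.mem_cons_self
      have hred : Red R act (([] : List G), x) (w₂, u₂) :=
        red_of_mk_eq_nrm hconfP h1 hn2
      have heq := nrm_red_eq hred (nrm_nil hnoeth x)
      have hw2 : w₂ = [] := congrArg Prod.fst heq
      have hu2 : u₂ = x := congrArg Prod.snd heq
      subst hw2; subst hu2
      have IH' := IH (([] : List (List G × X × X)).length + S'.length,
          ([] : List (List G × X × X)).length, lastw ([] : List (List G × X × X)))
        (lex1 (by simp)) [] S' v₂ y ω s t B rfl (by simpa using h2)
        (fun L hL => hS L (List.mem_cons_of_mem _ hL)) hys htB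
      simp only [List.nil_append] at IH' ⊢
      calc d u₂ y ≤ d u₂ v₂ + d v₂ y := hdtri _ _ _
        _ ≤ d u₂ v₂ + (WC d S' + B) := add_le_add_right IH' _
        _ = WC d ((([] : List G), u₂, v₂) :: S') + B := by simp [add_assoc]
  · -- C = C' ++ [L]
    rw [List.concat_eq_append] at hCC
    subst hCC
    obtain ⟨w, u, v⟩ := L
    by_cases hnu : Nrm R act (w, u)
    · -- shift the link into the irreducible suffix
      have harr : (C' ++ [(w, u, v)]) ++ S = C' ++ ((w, u, v) :: S) := by simp
      have IH' := IH (C'.length + ((w, u, v) :: S).length, C'.length, lastw C')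
        (lex2 (by simp only [List.length_append, List.length_cons, List.length_nil]; omega)
          (by simp))
        C' ((w, u, v) :: S) x y ω s t B rfl (by rwa [harr] at hchain)
        (by intro L hL
            rcases List.mem_cons.mp hL with rfl | hL
            · exact hnu
            · exact hS L hL) hys htB
      rw [harr]
      exact IH'
    · -- process the junction at the last link of C
      rw [List.append_assoc] at hchain
      obtain ⟨m₁, hC', hrest⟩ := chainP_split hchain
      rw [List.singleton_append, chainP_cons] at hrest
      obtain ⟨hm₁, hrest2⟩ := hrest
      subst hm₁
      cases S with
      | nil =>
        rw [chainP_nil] at hrest2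
        obtain ⟨N, hredN, hnN⟩ := exists_nf (act := act) hnoeth (w, v)
        have hredT : Red R act (ω, t) N :=
          red_of_mk_eq_nrm hconfP (hrest2.symm.trans (mk_eq_of_red hredN)) hnN
        rcases transport hnoeth hconfP hnonexp ω t N hredT hnN s with
          ⟨s₁, hs₁, hds₁⟩ | ⟨ρ, hh, a', b', _, _, hsb, hnb, _⟩
        swap
        · exfalso
          have := red_nrm_of_red_red hconfP hsb hys (nrm_nil hnoeth y)
          have := nrm_red_eq this hnb
          simp at this
        have hs₁y : Red R act (N.1, s₁) ([], y) :=
          red_nrm_of_red_red hconfP hs₁ hys (nrm_nil hnoeth y)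
        rcases transport hnoeth hconfP hnonexp w v N hredN hnN u with
          ⟨u'', hu'', hdu⟩ | ⟨ρ, hh, a', b', hva, haN, hub, hnb, hdab⟩
        · -- full transport: strip the last link
          have hch : ChainP R act (C' ++ []) (PGlob.mk R act ([], x))
              (PGlob.mk R act (N.1, u'')) := by
            rw [List.append_nil]
            exact (mk_eq_of_red hu'') ▸ hC'
          have hbound : d u'' s₁ ≤ d u v + B := by
            calc d u'' s₁ ≤ d u'' N.2 + d N.2 s₁ := hdtri _ _ _
              _ ≤ d u v + B := by
                  refine add_le_add ?_ (hds₁.trans htB)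
                  rw [hdsymm u'' N.2, hdsymm u v]
                  exact hdu
          have IH' := IH (C'.length + 0, C'.length, lastw C')
            (lex1 (by simp only [List.length_append, List.length_cons, List.length_nil]; omega))
            C' [] x y N.1 s₁ u'' (d u v + B) rfl hch (by simp) hs₁y hbound
          simp only [List.append_nil, WC_append, WC_cons, WC_nil] at IH' ⊢
          calc d x y ≤ WC d C' + (d u v + B) := IH'
            _ = WC d C' + (d u v + 0) + B := by rw [add_zero, add_assoc]
        · -- stuck: replace the last link by a smaller-word link
          have h1 : PGlob.mk R act (w, u) = PGlob.mk R act (ρ ++ [hh], b') :=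
            mk_eq_of_red hub
          have hch : ChainP R act ((C' ++ [(ρ ++ [hh], b', a')]) ++ [])
              (PGlob.mk R act ([], x)) (PGlob.mk R act (ω, t)) := by
            rw [List.append_nil]
            refine chainP_append (h1 ▸ hC') ?_
            exact ⟨rfl, (mk_eq_of_red hva).symm.trans hrest2⟩
          have IH' := IH ((C' ++ [(ρ ++ [hh], b', a')]).length + 0,
              (C' ++ [(ρ ++ [hh], b', a')]).length, lastw (C' ++ [(ρ ++ [hh], b', a')]))
            (by refine lex3 ?_ ?_ ?_
                · simp
                · simp
                · simp only [lastw_concat]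
                  exact transGen_word hub hnu hnb)
            (C' ++ [(ρ ++ [hh], b', a')]) [] x y ω s t B rfl hch (by simp) hys htB
          have hdb : d b' a' ≤ d u v := by
            rw [hdsymm b' a', hdsymm u v]; exact hdab
          simp only [List.append_nil, WC_append, WC_cons, WC_nil] at IH' ⊢
          calc d x y ≤ WC d C' + (d b' a' + 0) + B := IH'
            _ ≤ WC d C' + (d u v + 0) + B := by
                exact add_le_add_left (add_le_add_right (add_le_add_left hdb 0) _) _
      | cons L₂ S' =>
        obtain ⟨w₂, u₂, v₂⟩ := L₂
        rw [chainP_cons] at hrest2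
        obtain ⟨hj, hS'chain⟩ := hrest2
        have hn₂ : Nrm R act (w₂, u₂) := hS _ List.mem_cons_self
        have hred : Red R act (w, v) (w₂, u₂) := red_of_mk_eq_nrm hconfP hj hn₂
        rcases transport hnoeth hconfP hnonexp w v (w₂, u₂) hred hn₂ u with
          ⟨u'', hu'', hdu⟩ | ⟨ρ, hh, a', b', hva, haN, hub, hnb, hdab⟩
        · -- full transport: merge the two links
          have hch : ChainP R act ((C' ++ [(w₂, u'', v₂)]) ++ S')
              (PGlob.mk R act ([], x)) (PGlob.mk R act (ω, t)) := by
            rw [List.append_assoc]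
            refine chainP_append ((mk_eq_of_red hu'') ▸ hC') ?_
            exact ⟨rfl, hS'chain⟩
          have IH' := IH ((C' ++ [(w₂, u'', v₂)]).length + S'.length,
              (C' ++ [(w₂, u'', v₂)]).length, lastw (C' ++ [(w₂, u'', v₂)]))
            (lex1 (by simp only [List.length_append, List.length_cons, List.length_nil]; omega))
            (C' ++ [(w₂, u'', v₂)]) S' x y ω s t B rfl hch
            (fun L hL => hS L (List.mem_cons_of_mem _ hL)) hys htB
          have hkey : d u'' v₂ ≤ d u v + d u₂ v₂ := by
            calc d u'' v₂ ≤ d u'' u₂ + d u₂ v₂ := hdtri _ _ _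
              _ ≤ d u v + d u₂ v₂ := by
                  refine add_le_add ?_ (le_refl _)
                  rw [hdsymm u'' u₂, hdsymm u v]
                  exact hdu
          simp only [WC_append, WC_cons, WC_nil] at IH' ⊢
          calc d x y ≤ WC d C' + (d u'' v₂ + 0) + WC d S' + B := IH'
            _ ≤ WC d C' + (d u v + 0) + (d u₂ v₂ + WC d S') + B := by
                rw [add_zero, add_zero]
                calc WC d C' + d u'' v₂ + WC d S' + B
                    ≤ WC d C' + (d u v + d u₂ v₂) + WC d S' + B := by
                      exact add_le_add_left (add_le_add_left (add_le_add_right hkey _) _) _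
                  _ = WC d C' + d u v + (d u₂ v₂ + WC d S') + B := by ring
        · -- stuck: replace the last link of C by a smaller-word link
          have h1 : PGlob.mk R act (w, u) = PGlob.mk R act (ρ ++ [hh], b') :=
            mk_eq_of_red hub
          have hch : ChainP R act ((C' ++ [(ρ ++ [hh], b', a')]) ++ ((w₂, u₂, v₂) :: S'))
              (PGlob.mk R act ([], x)) (PGlob.mk R act (ω, t)) := by
            rw [List.append_assoc]
            refine chainP_append (h1 ▸ hC') ?_
            exact ⟨rfl, (mk_eq_of_red hva).symm.trans hj, hS'chain⟩
          have IH' := IH ((C' ++ [(ρ ++ [hh], b', a')]).length + ((w₂, u₂, v₂) :: S').length,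
              (C' ++ [(ρ ++ [hh], b', a')]).length, lastw (C' ++ [(ρ ++ [hh], b', a')]))
            (by refine lex3 ?_ ?_ ?_
                · simp
                · simp
                · simp only [lastw_concat]
                  exact transGen_word hub hnu hnb)
            (C' ++ [(ρ ++ [hh], b', a')]) ((w₂, u₂, v₂) :: S') x y ω s t B rfl hch hS hys htB
          have hdb : d b' a' ≤ d u v := by
            rw [hdsymm b' a', hdsymm u v]; exact hdab
          simp only [WC_append, WC_cons, WC_nil] at IH' ⊢
          refine IH'.trans ?_
          exact add_le_add_left (add_le_add_left
            (add_le_add_right (add_le_add_left hdb 0) _) _) _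

end Aux

end S17
namespace S17

variable {G X : Type*} {R : List G → List G → Prop} {act : G → X → Option X}

/-- Reversal of a chain. -/
def revC : List (List G × X × X) → List (List G × X × X) :=
  fun C => (C.map fun l => (l.1, l.2.2, l.2.1)).reverse

lemma chainP_rev {C : List (List G × X × X)} {c e : PGlob R act}
    (h : ChainP R act C c e) : ChainP R act (revC C) e c := by
  induction C generalizing c with
  | nil =>
      rw [chainP_nil] at h
      subst h
      rw [revC]; simp [chainP_nil]
  | cons l T ih =>
      obtain ⟨h1, h2⟩ := h
      have : revC (l :: T) = revC T ++ [(l.1, l.2.2, l.2.1)] := by simp [revC]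
      rw [this]
      exact chainP_append (ih h2) ⟨rfl, h1.symm⟩

lemma WC_rev {d : X → X → ℝ≥0∞} (hdsymm : ∀ x y, d x y = d y x)
    {C : List (List G × X × X)} : WC d (revC C) = WC d C := by
  rw [WC, revC, List.map_reverse, List.sum_reverse, List.map_map, WC]
  congr 1
  refine List.map_congr_left fun l _ => ?_
  exact hdsymm _ _

/-- The chain (path) pseudometric on the globalization. -/
noncomputable def ChainMet (R : List G → List G → Prop) (act : G → X → Option X)
    (d : X → X → ℝ≥0∞) : PGlob R act → PGlob R act → ℝ≥0∞ :=
  fun a b => ⨅ (C : List (List G × X × X)) (_ : ChainP R act C a b), WC d C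

lemma chainMet_self {d : X → X → ℝ≥0∞} (a : PGlob R act) : ChainMet R act d a a = 0 := by
  refine le_antisymm ?_ zero_le
  have := iInf₂_le (f := fun (C : List (List G × X × X)) (_ : ChainP R act C a a) => WC d C)
    [] (by rw [chainP_nil])
  simpa [ChainMet] using this

lemma chainMet_le {d : X → X → ℝ≥0∞} {a b : PGlob R act} {C : List (List G × X × X)}
    (h : ChainP R act C a b) : ChainMet R act d a b ≤ WC d C :=
  iInf₂_le C h

lemma chainMet_symm {d : X → X → ℝ≥0∞} (hdsymm : ∀ x y, d x y = d y x)
    (a b : PGlob R act) : ChainMet R act d a b = ChainMet R act d b a := by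
  have key : ∀ a b : PGlob R act, ChainMet R act d a b ≤ ChainMet R act d b a := by
    intro a b
    refine le_iInf₂ fun C hC => ?_
    exact (chainMet_le (chainP_rev hC)).trans (le_of_eq (WC_rev hdsymm))
  exact le_antisymm (key a b) (key b a)

lemma chainMet_tri {d : X → X → ℝ≥0∞} (a b c : PGlob R act) :
    ChainMet R act d a c ≤ ChainMet R act d a b + ChainMet R act d b c := by
  rw [ChainMet, ChainMet, ChainMet, ENNReal.iInf_add]
  refine le_iInf fun C₁ => ?_
  rw [ENNReal.iInf_add]
  refine le_iInf fun h₁ => ?_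
  rw [ENNReal.add_iInf]
  refine le_iInf fun C₂ => ?_
  rw [ENNReal.add_iInf]
  refine le_iInf fun h₂ => ?_
  have := chainMet_le (d := d) (chainP_append h₁ h₂)
  rw [ChainMet] at this
  exact this.trans (le_of_eq WC_append)

lemma chainMet_nonexp {d : X → X → ℝ≥0∞} (w : List G) (u v : X) :
    ChainMet R act d (PGlob.mk R act (w, u)) (PGlob.mk R act (w, v)) ≤ d u v := by
  have := chainMet_le (d := d) (C := [(w, u, v)])
    (a := PGlob.mk R act (w, u)) (b := PGlob.mk R act (w, v)) ⟨rfl, rfl⟩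
  simpa using this

lemma chain_bound {d : X → X → ℝ≥0∞}
    (hnoeth : WellFounded (fun w₁ w₂ : List G => MStep R w₂ w₁))
    (hconfP : ∀ p q₁ q₂ : List G × X, Red R act p q₁ → Red R act p q₂ →
      ∃ t, Red R act q₁ t ∧ Red R act q₂ t)
    (hnonexp : ∀ (g : G) (x y x' y' : X), act g x = some x' → act g y = some y' →
      d x' y' ≤ d x y)
    (hd0 : ∀ x, d x x = 0)
    (hdsymm : ∀ x y, d x y = d y x)
    (hdtri : ∀ x y z, d x z ≤ d x y + d y z)
    {C : List (List G × X × X)} {x y : X}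
    (h : ChainP R act C (PGlob.mk R act ([], x)) (PGlob.mk R act ([], y))) :
    d x y ≤ WC d C := by
  have := aux_main hnoeth hconfP hnonexp hdsymm hdtri
    (C.length + ([] : List (List G × X × X)).length, C.length, lastw C)
    C [] x y [] y y 0 rfl (by simpa using h) (by simp)
    Relation.ReflTransGen.refl (le_of_eq (hd0 y))
  simpa using this

end S17
/-- The canonical map of a weak pseudometric space `X` into the weak
pseudometric globalization `Y` of a confluent non-expansive partial action is
isometric: `D([e,x], [e,y]) = d(x,y)`. Here `D` is the largest weak
pseudometric on `Y` making all the maps `x ↦ [w, x]` non-expansive. -/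
theorem stmt_17 {G X : Type*}
    (R : List G → List G → Prop) (act : G → X → Option X)
    (hnoeth : WellFounded (fun w₁ w₂ : List G => MStep R w₂ w₁))
    (hconfM : ∀ w s₁ s₂ : List G, Relation.ReflTransGen (MStep R) w s₁ →
      Relation.ReflTransGen (MStep R) w s₂ →
      ∃ t, Relation.ReflTransGen (MStep R) s₁ t ∧ Relation.ReflTransGen (MStep R) s₂ t)
    (hnosingle : ∀ (g : G) (r : List G), ¬ R [g] r)
    (hconfP : ∀ p q₁ q₂ : List G × X, Relation.ReflTransGen (PStep R act) p q₁ →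
      Relation.ReflTransGen (PStep R act) p q₂ →
      ∃ t, Relation.ReflTransGen (PStep R act) q₁ t ∧
        Relation.ReflTransGen (PStep R act) q₂ t)
    (d : X → X → ℝ≥0∞)
    (hd0 : ∀ x, d x x = 0) (hdsymm : ∀ x y, d x y = d y x)
    (hdtri : ∀ x y z, d x z ≤ d x y + d y z)
    (hnonexp : ∀ (g : G) (x y x' y' : X), act g x = some x' → act g y = some y' →
      d x' y' ≤ d x y)
    (D : PGlob R act → PGlob R act → ℝ≥0∞)
    (hD0 : ∀ a, D a a = 0) (hDsymm : ∀ a b, D a b = D b a)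
    (hDtri : ∀ a b c, D a c ≤ D a b + D b c)
    (hDnonexp : ∀ (w : List G) (x y : X),
      D (PGlob.mk R act (w, x)) (PGlob.mk R act (w, y)) ≤ d x y)
    (hDmax : ∀ D' : PGlob R act → PGlob R act → ℝ≥0∞,
      (∀ a, D' a a = 0) → (∀ a b, D' a b = D' b a) →
      (∀ a b c, D' a c ≤ D' a b + D' b c) →
      (∀ (w : List G) (x y : X),
        D' (PGlob.mk R act (w, x)) (PGlob.mk R act (w, y)) ≤ d x y) →
      ∀ a b, D' a b ≤ D a b)
    : ∀ x y : X, D (PGlob.mk R act ([], x)) (PGlob.mk R act ([], y)) = d x y := by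
  intro x y
  refine le_antisymm (hDnonexp [] x y) ?_
  have hle := hDmax (S17.ChainMet R act d) (S17.chainMet_self)
    (S17.chainMet_symm hdsymm) (S17.chainMet_tri) (S17.chainMet_nonexp)
    (PGlob.mk R act ([], x)) (PGlob.mk R act ([], y))
  refine le_trans ?_ hle
  rw [S17.ChainMet]
  refine le_iInf fun C => le_iInf fun hC => ?_
  exact S17.chain_bound hnoeth hconfP hnonexp hd0 hdsymm hdtri hC
end

section
/- Let α be a confluent non-expansive partial action of a monoid M on a nonempty pseudometric space X (all distances finite). Then the weak pseudometric globalization Y has all distances finite if and only if α is nowhere degenerate, i.e., dom(g) ≠ ∅ for every generator g ∈ G. -/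
open scoped ENNReal

section Aux

variable {G X : Type*} (R : List G → List G → Prop) (act : G → X → Option X)

/-- A word is `MNormal` if no `MStep` applies. -/
def MNormal (w : List G) : Prop := ∀ w', ¬ MStep R w w'

/-- A pair is `Stuck` if no `PStep` applies. -/
def Stuck (p : List G × X) : Prop := ∀ q, ¬ PStep R act p q

variable {R act}

lemma noRnil (hnoeth : WellFounded (fun w₁ w₂ : List G => MStep R w₂ w₁)) :
    ∀ r, ¬ R [] r := by
  intro r hr
  have : ∀ w : List G, False := fun w =>
    hnoeth.induction (C := fun _ => False) w
      (fun w h => h (r ++ w) ⟨[], [], r, w, hr, by simp, by simp⟩)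
  exact this []

lemma mnormal_prefix {v s : List G} (h : MNormal R (v ++ s)) : MNormal R v := by
  rintro v' ⟨a, l, r, b, hR, h1, _⟩
  exact h (a ++ r ++ (b ++ s)) ⟨a, l, r, b ++ s, hR, by simp [h1], by simp⟩

lemma exists_mnf (hnoeth : WellFounded (fun w₁ w₂ : List G => MStep R w₂ w₁)) (w : List G) :
    ∃ v, Relation.ReflTransGen (MStep R) w v ∧ MNormal R v := by
  induction w using hnoeth.induction with
  | _ w ih =>
    by_cases h : ∃ w', MStep R w w'
    · obtain ⟨w', hw'⟩ := h
      obtain ⟨v, hv, hnv⟩ := ih w' hw'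
      exact ⟨v, Relation.ReflTransGen.head hw' hv, hnv⟩
    · exact ⟨w, Relation.ReflTransGen.refl, fun w' hw' => h ⟨w', hw'⟩⟩

lemma msteps_lift {w v : List G} (h : Relation.ReflTransGen (MStep R) w v) (x : X) :
    Relation.ReflTransGen (PStep R act) (w, x) (v, x) := by
  induction h with
  | refl => exact .refl
  | tail _ hstep ih => exact ih.tail (Or.inl ⟨hstep, rfl⟩)

lemma eqvGen_of_mk_eq {p q : List G × X}
    (h : PGlob.mk R act p = PGlob.mk R act q) :
    Relation.EqvGen (PStep R act) p q := by
  have h' := Quot.eqvGen_exact h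
  clear h
  induction h' with
  | rel a b hab => exact hab
  | refl a => exact .refl a
  | symm a b _ ih => exact ih.symm a b
  | trans a b c _ _ ih1 ih2 => exact ih1.trans a b c ih2

lemma mk_eq_of_rtg {p q : List G × X} (h : Relation.ReflTransGen (PStep R act) p q) :
    PGlob.mk R act p = PGlob.mk R act q := by
  induction h with
  | refl => rfl
  | tail _ hstep ih => exact ih.trans (Quot.sound (Relation.EqvGen.rel _ _ hstep))

variable (hconfP : ∀ p q₁ q₂ : List G × X, Relation.ReflTransGen (PStep R act) p q₁ →
      Relation.ReflTransGen (PStep R act) p q₂ →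
      ∃ t, Relation.ReflTransGen (PStep R act) q₁ t ∧
        Relation.ReflTransGen (PStep R act) q₂ t)

include hconfP in
lemma church_rosser {p q : List G × X} (h : Relation.EqvGen (PStep R act) p q) :
    ∃ t, Relation.ReflTransGen (PStep R act) p t ∧ Relation.ReflTransGen (PStep R act) q t := by
  induction h with
  | rel a b hab => exact ⟨b, .single hab, .refl⟩
  | refl a => exact ⟨a, .refl, .refl⟩
  | symm a b _ ih => exact ⟨ih.choose, ih.choose_spec.2, ih.choose_spec.1⟩
  | trans a b c _ _ ih1 ih2 =>
    obtain ⟨t1, ha1, hb1⟩ := ih1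
    obtain ⟨t2, hb2, hc2⟩ := ih2
    obtain ⟨t3, h13, h23⟩ := hconfP b t1 t2 hb1 hb2
    exact ⟨t3, ha1.trans h13, hc2.trans h23⟩

lemma stuck_rtg {p q : List G × X} (hs : Stuck R act p)
    (h : Relation.ReflTransGen (PStep R act) p q) : q = p := by
  induction h using Relation.ReflTransGen.head_induction_on with
  | refl => rfl
  | head hstep _ _ => exact absurd hstep (hs _)

include hconfP in
lemma reduce_of_mk_eq {p q : List G × X} (h : PGlob.mk R act p = PGlob.mk R act q)
    (hs : Stuck R act q) : Relation.ReflTransGen (PStep R act) p q := by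
  obtain ⟨t, hp, hq⟩ := church_rosser hconfP (eqvGen_of_mk_eq h)
  rwa [stuck_rtg hs hq] at hp

/-- From a normal word, reductions only strip letters from the right: the word
component of a reduct is a prefix. -/
lemma normal_reduct_prefix {p q : List G × X} (h : Relation.ReflTransGen (PStep R act) p q)
    (hn : MNormal R p.1) : q.1 <+: p.1 := by
  induction h using Relation.ReflTransGen.head_induction_on with
  | refl => exact List.prefix_refl _
  | head hstep _ ih =>
    rename_i p' c _
    rcases hstep with ⟨hm, _⟩ | ⟨w, g', y, h1, _, h3, _⟩
    · exact absurd hm (hn _)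
    · have hc : MNormal R c.1 := by rw [h3]; exact mnormal_prefix (h1 ▸ hn)
      refine (ih hc).trans ?_
      rw [h1, h3]; exact ⟨[g'], rfl⟩

/-- If `g` is nowhere defined and a normal word starts with `g`, reducts keep
starting with `g`. -/
lemma ghead_reduct {g : G} (hg : ∀ x, act g x = none)
    {p q : List G × X} (h : Relation.ReflTransGen (PStep R act) p q)
    (hn : MNormal R p.1) (ht : ∃ t, p.1 = g :: t) : ∃ t', q.1 = g :: t' := by
  induction h using Relation.ReflTransGen.head_induction_on with
  | refl => exact ht
  | head hstep _ ih =>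
    rename_i p' c _
    obtain ⟨t, hpt⟩ := ht
    rcases hstep with ⟨hm, _⟩ | ⟨w, g', y, h1, h2, h3, _⟩
    · exact absurd hm (hn _)
    · have hc : MNormal R c.1 := by rw [h3]; exact mnormal_prefix (h1 ▸ hn)
      cases w with
      | nil =>
        simp only [List.nil_append] at h1
        rw [hpt] at h1
        have : g' = g := by injection h1.symm
        rw [this, hg p'.2] at h2
        exact absurd h2 (by simp)
      | cons hd w' =>
        apply ih hc
        refine ⟨w', ?_⟩
        rw [h3]
        have : hd = g := by
          rw [hpt] at h1
          injection h1.symm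
        rw [this]

/-- From a normal word, one can reduce to a stuck pair. -/
lemma strip_to_stuck {w : List G} (hn : MNormal R w) :
    ∀ x : X, ∃ q, Relation.ReflTransGen (PStep R act) (w, x) q ∧ Stuck R act q := by
  induction w using List.reverseRecOn with
  | nil =>
    intro x
    refine ⟨([], x), .refl, ?_⟩
    rintro q (⟨hm, _⟩ | ⟨w', g', y, h1, _, _, _⟩)
    · exact hn _ hm
    · exact absurd h1.symm (by simp)
  | append_singleton w g' ih =>
    intro x
    by_cases h : ∃ y, act g' x = some y
    · obtain ⟨y, hy⟩ := h
      obtain ⟨q, hq, hsq⟩ := ih (mnormal_prefix hn) y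
      exact ⟨q, Relation.ReflTransGen.head (Or.inr ⟨w, g', y, rfl, hy, rfl, rfl⟩) hq, hsq⟩
    · refine ⟨(w ++ [g'], x), .refl, ?_⟩
      rintro q (⟨hm, _⟩ | ⟨w', g'', y, h1, h2, _, _⟩)
      · exact hn _ hm
      · obtain ⟨hw, hg⟩ := List.append_inj' h1.symm rfl
        have : g'' = g' := by injection hg
        exact h ⟨y, this ▸ h2⟩

lemma stuck_nil (hnoeth : WellFounded (fun w₁ w₂ : List G => MStep R w₂ w₁)) (x : X) :
    Stuck R act (([] : List G), x) := by
  rintro q (⟨⟨a, l, r, b, hR, h1, _⟩, _⟩ | ⟨w', g', y, h1, _, _, _⟩)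
  · have : l = [] := by
      have := congrArg List.length h1
      simp at this
      exact List.length_eq_zero_iff.mp (by omega)
    exact noRnil hnoeth r (this ▸ hR)
  · exact absurd h1.symm (by simp)

lemma mnormal_single (hnoeth : WellFounded (fun w₁ w₂ : List G => MStep R w₂ w₁))
    (hnosingle : ∀ (g : G) (r : List G), ¬ R [g] r) (g : G) : MNormal R [g] := by
  rintro w' ⟨a, l, r, b, hR, h1, _⟩
  have hl := congrArg List.length h1
  simp at hl
  rcases l with _ | ⟨hd, tl⟩
  · exact noRnil hnoeth r hR
  · simp at hl
    have ha : a = [] := List.length_eq_zero_iff.mp (by omega)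
    have hb : b = [] := List.length_eq_zero_iff.mp (by omega)
    have htl : tl = [] := List.length_eq_zero_iff.mp (by omega)
    subst ha hb htl
    simp at h1
    exact hnosingle g r (h1 ▸ hR)

lemma stuck_single (hnoeth : WellFounded (fun w₁ w₂ : List G => MStep R w₂ w₁))
    (hnosingle : ∀ (g : G) (r : List G), ¬ R [g] r)
    {g : G} (hg : ∀ x, act g x = none) (x : X) : Stuck R act (([g] : List G), x) := by
  rintro q (⟨hm, _⟩ | ⟨w', g', y, h1, h2, _, _⟩)
  · exact mnormal_single hnoeth hnosingle g _ hm
  · obtain ⟨hw, hg'⟩ := List.append_inj' ((List.nil_append [g]).trans h1) rfl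
    have : g = g' := by injection hg'
    rw [← this] at h2
    simp only [hg x] at h2
    exact absurd h2 (by simp)

end Aux

/-- For a confluent non-expansive partial action on a nonempty pseudometric
space `X` (all distances finite), the weak pseudometric globalization `Y` has
all distances finite iff the action is nowhere degenerate, i.e. every
generator has nonempty domain. -/
theorem stmt_18 {G X : Type*}
    (R : List G → List G → Prop) (act : G → X → Option X)
    (hnoeth : WellFounded (fun w₁ w₂ : List G => MStep R w₂ w₁))
    (hconfM : ∀ w s₁ s₂ : List G, Relation.ReflTransGen (MStep R) w s₁ →
      Relation.ReflTransGen (MStep R) w s₂ →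
      ∃ t, Relation.ReflTransGen (MStep R) s₁ t ∧ Relation.ReflTransGen (MStep R) s₂ t)
    (hnosingle : ∀ (g : G) (r : List G), ¬ R [g] r)
    (hconfP : ∀ p q₁ q₂ : List G × X, Relation.ReflTransGen (PStep R act) p q₁ →
      Relation.ReflTransGen (PStep R act) p q₂ →
      ∃ t, Relation.ReflTransGen (PStep R act) q₁ t ∧
        Relation.ReflTransGen (PStep R act) q₂ t)
    (d : X → X → ℝ≥0∞)
    (hd0 : ∀ x, d x x = 0) (hdsymm : ∀ x y, d x y = d y x)
    (hdtri : ∀ x y z, d x z ≤ d x y + d y z)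
    (hnonexp : ∀ (g : G) (x y x' y' : X), act g x = some x' → act g y = some y' →
      d x' y' ≤ d x y)
    (D : PGlob R act → PGlob R act → ℝ≥0∞)
    (hD0 : ∀ a, D a a = 0) (hDsymm : ∀ a b, D a b = D b a)
    (hDtri : ∀ a b c, D a c ≤ D a b + D b c)
    (hDnonexp : ∀ (w : List G) (x y : X),
      D (PGlob.mk R act (w, x)) (PGlob.mk R act (w, y)) ≤ d x y)
    (hDmax : ∀ D' : PGlob R act → PGlob R act → ℝ≥0∞,
      (∀ a, D' a a = 0) → (∀ a b, D' a b = D' b a) →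
      (∀ a b c, D' a c ≤ D' a b + D' b c) →
      (∀ (w : List G) (x y : X),
        D' (PGlob.mk R act (w, x)) (PGlob.mk R act (w, y)) ≤ d x y) →
      ∀ a b, D' a b ≤ D a b)
    (hne : Nonempty X) (hfin : ∀ x y : X, d x y ≠ ⊤) :
    (∀ a b : PGlob R act, D a b ≠ ⊤) ↔ ∀ g : G, ∃ x : X, (act g x).isSome := by
  classical
  constructor
  · -- finite ⇒ nowhere degenerate
    intro hDfin g
    by_contra hgd
    push_neg at hgd
    have hg : ∀ x, act g x = none := fun x => Option.not_isSome_iff_eq_none.mp (by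
      simpa using hgd x)
    obtain ⟨x₀⟩ := hne
    -- the "shares a word" relation on the globalization and the equivalence it generates
    set r₀ : PGlob R act → PGlob R act → Prop := fun a b =>
      ∃ (w : List G) (x y : X), a = PGlob.mk R act (w, x) ∧ b = PGlob.mk R act (w, y) with hr₀
    set T := Relation.EqvGen r₀ with hT
    -- the indicator pseudometric of T is admissible
    set D' : PGlob R act → PGlob R act → ℝ≥0∞ := fun a b => if T a b then 0 else ⊤ with hD'
    have hTrefl : ∀ a, T a a := by
      intro a
      obtain ⟨p, hp⟩ := Quot.exists_rep a
      exact Relation.EqvGen.rel _ _ ⟨p.1, p.2, p.2, by rw [← hp, Prod.mk.eta]; rfl,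
        by rw [← hp, Prod.mk.eta]; rfl⟩
    have hD'0 : ∀ a, D' a a = 0 := fun a => if_pos (hTrefl a)
    have hD'symm : ∀ a b, D' a b = D' b a := by
      intro a b
      by_cases h : T a b
      · rw [hD']; simp only; rw [if_pos h, if_pos (h.symm a b)]
      · rw [hD']; simp only; rw [if_neg h, if_neg (fun h' => h (h'.symm b a))]
    have hD'tri : ∀ a b c, D' a c ≤ D' a b + D' b c := by
      intro a b c
      by_cases hab : T a b
      · by_cases hbc : T b c
        · rw [hD']; simp only; rw [if_pos (hab.trans _ _ _ hbc)]; exact zero_le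
        · rw [hD']; simp only; rw [if_neg hbc, add_top]; exact le_top
      · rw [hD']; simp only; rw [if_neg hab, top_add]; exact le_top
    have hD'ne : ∀ (w : List G) (x y : X),
        D' (PGlob.mk R act (w, x)) (PGlob.mk R act (w, y)) ≤ d x y := by
      intro w x y
      rw [hD']; simp only
      rw [if_pos (Relation.EqvGen.rel _ _ ⟨w, x, y, rfl, rfl⟩)]
      exact zero_le
    have hTg : T (PGlob.mk R act ([], x₀)) (PGlob.mk R act ([g], x₀)) := by
      by_contra hnT
      have hle := hDmax D' hD'0 hD'symm hD'tri hD'ne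
        (PGlob.mk R act ([], x₀)) (PGlob.mk R act ([g], x₀))
      rw [hD'] at hle; simp only at hle
      rw [if_neg hnT] at hle
      exact hDfin _ _ (top_le_iff.mp hle)
    -- the invariant: the class reduces to a stuck pair whose word starts with g
    set Φ : PGlob R act → Prop := fun a =>
      ∃ (w : List G) (x : X) (t : List G) (u : X), a = PGlob.mk R act (w, x) ∧
        Relation.ReflTransGen (PStep R act) (w, x) (g :: t, u) ∧
        Stuck R act (g :: t, u) with hΦ
    have key : ∀ a b, r₀ a b → Φ a → Φ b := by
      rintro a b ⟨w, x, y, ha, hb⟩ ⟨v, z, t, u, hav, hred, hstk⟩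
      have e1 : PGlob.mk R act (w, x) = PGlob.mk R act (g :: t, u) := by
        rw [← ha, hav]; exact mk_eq_of_rtg hred
      have h2 := reduce_of_mk_eq hconfP e1 hstk
      obtain ⟨wNF, hwnf, hwn⟩ := exists_mnf hnoeth w
      obtain ⟨c, hc1, hc2⟩ := hconfP (w, x) (wNF, x) (g :: t, u) (msteps_lift hwnf x) h2
      rw [stuck_rtg hstk hc2] at hc1
      obtain ⟨s, hs⟩ := normal_reduct_prefix hc1 hwn
      obtain ⟨q', hq', hsq'⟩ := strip_to_stuck hwn y
      obtain ⟨t', ht'⟩ := ghead_reduct hg hq' hwn ⟨t ++ s, by rw [← hs]; simp⟩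
      have hq'' : q' = (g :: t', q'.2) := by rw [← ht']
      refine ⟨w, y, t', q'.2, hb, ?_, hq'' ▸ hsq'⟩
      rw [← hq'']
      exact (msteps_lift hwnf y).trans hq'
    have inv : ∀ a b, T a b → (Φ a ↔ Φ b) := by
      intro a b h
      induction h with
      | rel a b hab =>
        obtain ⟨w, x, y, ha, hb⟩ := hab
        exact Iff.intro (key a b ⟨w, x, y, ha, hb⟩) (key b a ⟨w, y, x, hb, ha⟩)
      | refl a => exact Iff.rfl
      | symm a b _ ih => exact ih.symm
      | trans a b c _ _ ih1 ih2 => exact ih1.trans ih2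
    have hΦn : ¬ Φ (PGlob.mk R act ([], x₀)) := by
      rintro ⟨w, x, t, u, ha, hred, hstk⟩
      have h2 := reduce_of_mk_eq hconfP ha.symm (stuck_nil hnoeth x₀)
      obtain ⟨c, hc1, hc2⟩ := hconfP (w, x) ([], x₀) (g :: t, u) h2 hred
      have e1 := stuck_rtg (stuck_nil hnoeth x₀) hc1
      have e2 := stuck_rtg hstk hc2
      rw [e1] at e2
      exact absurd (congrArg Prod.fst e2) (by simp)
    exact hΦn ((inv _ _ hTg).mpr
      ⟨[g], x₀, [], x₀, rfl, .refl, stuck_single hnoeth hnosingle hg x₀⟩)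
  · -- nowhere degenerate ⇒ finite
    intro hgd a b
    have claim : ∀ (w : List G) (x : X),
        ∃ z, D (PGlob.mk R act (w, x)) (PGlob.mk R act ([], z)) ≠ ⊤ := by
      intro w
      induction w using List.reverseRecOn with
      | nil => exact fun x => ⟨x, by rw [hD0]; simp⟩
      | append_singleton w g' ih =>
        intro x
        obtain ⟨x₁, hx₁⟩ := hgd g'
        obtain ⟨y₁, hy₁⟩ := Option.isSome_iff_exists.mp hx₁
        obtain ⟨z, hz⟩ := ih y₁
        refine ⟨z, fun htop => ?_⟩
        have heq : PGlob.mk R act (w ++ [g'], x₁) = PGlob.mk R act (w, y₁) :=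
          Quot.sound (Relation.EqvGen.rel _ _ (Or.inr ⟨w, g', y₁, rfl, hy₁, rfl, rfl⟩))
        have h1 : D (PGlob.mk R act (w ++ [g'], x)) (PGlob.mk R act (w ++ [g'], x₁)) ≠ ⊤ :=
          fun h => hfin x x₁ (top_le_iff.mp (h ▸ hDnonexp (w ++ [g']) x x₁))
        have h2 := hDtri (PGlob.mk R act (w ++ [g'], x)) (PGlob.mk R act (w ++ [g'], x₁))
          (PGlob.mk R act ([], z))
        rw [heq] at h1 h2
        rw [htop] at h2
        exact (ENNReal.add_ne_top.mpr ⟨h1, hz⟩) (top_le_iff.mp h2)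
    obtain ⟨⟨w₁, x₁⟩, hp⟩ := Quot.exists_rep a
    obtain ⟨⟨w₂, x₂⟩, hq⟩ := Quot.exists_rep b
    have ha : a = PGlob.mk R act (w₁, x₁) := hp.symm
    have hb : b = PGlob.mk R act (w₂, x₂) := hq.symm
    obtain ⟨z₁, h₁⟩ := claim w₁ x₁
    obtain ⟨z₂, h₂⟩ := claim w₂ x₂
    have h3 : D (PGlob.mk R act ([], z₁)) (PGlob.mk R act ([], z₂)) ≠ ⊤ :=
      fun h => hfin z₁ z₂ (top_le_iff.mp (h ▸ hDnonexp [] z₁ z₂))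
    have h4 : D (PGlob.mk R act ([], z₂)) b ≠ ⊤ := by
      rw [hDsymm, hb]; exact h₂
    intro htop
    have t1 := hDtri a (PGlob.mk R act ([], z₁)) b
    have t2 := hDtri (PGlob.mk R act ([], z₁)) (PGlob.mk R act ([], z₂)) b
    rw [htop] at t1
    have : (⊤ : ℝ≥0∞) ≤ D a (PGlob.mk R act ([], z₁)) +
        (D (PGlob.mk R act ([], z₁)) (PGlob.mk R act ([], z₂)) +
          D (PGlob.mk R act ([], z₂)) b) :=
      t1.trans (add_le_add_right t2 _)
    have hfin1 : D a (PGlob.mk R act ([], z₁)) ≠ ⊤ := by rw [ha]; exact h₁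
    exact (ENNReal.add_ne_top.mpr ⟨hfin1, ENNReal.add_ne_top.mpr ⟨h3, h4⟩⟩)
      (top_le_iff.mp this)
end
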